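/- arXiv:math/0602285 — 9 statements merged into one kernel-verified Lean document; each statement's English description precedes it below -/
import Mathlib

section
/- Let p be a prime. Define polynomials Q_n in ℤ[1/p][X_0,…,X_n,Y_0,…,Y_n] by the recurrence ∑_{i=0}^{n} p^i (X_i(1+Y_i))^{p^{n-i}} = ∑_{i=0}^{n} p^i X_i^{p^{n-i}} + ∑_{i=0}^{n} p^i Q_i^{p^{n-i}}. Then each Q_n has coefficients in ℤ, and Q_n belongs to the ideal of ℤ[X_0,…,X_n,Y_0,…,Y_n] generated by Y_0,…,Y_n. -/
open MvPolynomial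

private lemma aux_span {σ : Type*} (s : Set σ) [DecidablePred (· ∈ s)]
    (q : MvPolynomial σ ℤ) :
    q - aeval (fun v => if v ∈ s then 0 else X v) q ∈
      Ideal.span (MvPolynomial.X '' s : Set (MvPolynomial σ ℤ)) := by
  induction q using MvPolynomial.induction_on with
  | C a => simp
  | add f g hf hg =>
      have h := Ideal.add_mem _ hf hg
      convert h using 1
      rw [map_add]; ring
  | mul_X f n hf =>
      rw [map_mul, aeval_X]
      by_cases h : n ∈ s
      · rw [if_pos h, mul_zero, sub_zero]
        exact Ideal.mul_mem_left _ _ (Ideal.subset_span ⟨n, h, rfl⟩)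
      · rw [if_neg h, ← sub_mul]
        exact Ideal.mul_mem_right _ _ hf

/-- Let `p` be a prime.  Let `Q n` be the polynomials (a priori with
rational, i.e. `ℤ[1/p]`, coefficients) determined by the ghost-component recurrence
`∑_{i=0}^{n} p^i (X_i(1+Y_i))^{p^{n-i}} = ∑_{i=0}^{n} p^i X_i^{p^{n-i}} + ∑_{i=0}^{n} p^i Q_i^{p^{n-i}}`.
Then each `Q n` has integer coefficients, and (as an integral polynomial) it lies in the
ideal of `ℤ[X_0,…,X_n,Y_0,…,Y_n]` generated by `Y_0, …, Y_n`.
Here the variable `X i` is `X (Sum.inl i)` and `Y i` is `X (Sum.inr i)`. -/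
theorem stmt0 (p : ℕ) (hp : p.Prime) (Q : ℕ → MvPolynomial (ℕ ⊕ ℕ) ℚ)
    (hQ : ∀ n : ℕ,
      ∑ i ∈ Finset.range (n + 1),
        (p : MvPolynomial (ℕ ⊕ ℕ) ℚ) ^ i *
          (X (Sum.inl i) * (1 + X (Sum.inr i))) ^ (p ^ (n - i)) =
      ∑ i ∈ Finset.range (n + 1),
        (p : MvPolynomial (ℕ ⊕ ℕ) ℚ) ^ i * (X (Sum.inl i)) ^ (p ^ (n - i)) +
      ∑ i ∈ Finset.range (n + 1),
        (p : MvPolynomial (ℕ ⊕ ℕ) ℚ) ^ i * (Q i) ^ (p ^ (n - i))) :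
    ∀ n : ℕ, ∃ q : MvPolynomial (ℕ ⊕ ℕ) ℤ,
      MvPolynomial.map (Int.castRingHom ℚ) q = Q n ∧
      q ∈ Ideal.span {P : MvPolynomial (ℕ ⊕ ℕ) ℤ | ∃ j ≤ n, P = X (Sum.inr j)} := by
  classical
  have hFact : Fact p.Prime := ⟨hp⟩
  -- the substitution families
  set fZ : Fin 2 × ℕ → MvPolynomial (ℕ ⊕ ℕ) ℤ := fun v =>
    if v.1 = 0 then X (Sum.inl v.2) * (1 + X (Sum.inr v.2)) else X (Sum.inl v.2) with hfZ
  set fQ : Fin 2 × ℕ → MvPolynomial (ℕ ⊕ ℕ) ℚ := fun v =>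
    if v.1 = 0 then X (Sum.inl v.2) * (1 + X (Sum.inr v.2)) else X (Sum.inl v.2) with hfQ
  set q : ℕ → MvPolynomial (ℕ ⊕ ℕ) ℤ := fun n => aeval fZ (WittVector.wittSub p n) with hq
  set S : ℕ → MvPolynomial (ℕ ⊕ ℕ) ℚ := fun n =>
    aeval fQ (wittStructureRat p (X 0 - X 1 : MvPolynomial (Fin 2) ℚ) n) with hS
  -- map q = S
  have hmapΦ : MvPolynomial.map (Int.castRingHom ℚ) (X 0 - X 1 : MvPolynomial (Fin 2) ℤ)
      = (X 0 - X 1 : MvPolynomial (Fin 2) ℚ) := by simp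
  have hmapq : ∀ n, MvPolynomial.map (Int.castRingHom ℚ) (q n) = S n := by
    intro n
    have key : ∀ W : MvPolynomial (Fin 2 × ℕ) ℤ,
        MvPolynomial.map (Int.castRingHom ℚ) (aeval fZ W) = aeval fQ (MvPolynomial.map (Int.castRingHom ℚ) W) := by
      intro W
      induction W using MvPolynomial.induction_on with
      | C a => simp [algebraMap_eq]
      | add f g hf hg => simp only [map_add, hf, hg]
      | mul_X f v hf =>
          have h1 : MvPolynomial.map (Int.castRingHom ℚ) (fZ v) = fQ v := by
            by_cases hv : v.1 = 0 <;> simp [hfZ, hfQ, hv]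
          simp only [map_mul, aeval_X, map_X, hf, h1]
    rw [hq, hS, key, WittVector.wittSub, map_wittStructureInt, hmapΦ]
  -- ghost identity for S
  have hghostS : ∀ n,
      ∑ i ∈ Finset.range (n + 1), (p : MvPolynomial (ℕ ⊕ ℕ) ℚ) ^ i * (S i) ^ (p ^ (n - i)) =
      ∑ i ∈ Finset.range (n + 1),
        (p : MvPolynomial (ℕ ⊕ ℕ) ℚ) ^ i *
          (X (Sum.inl i) * (1 + X (Sum.inr i))) ^ (p ^ (n - i)) -
      ∑ i ∈ Finset.range (n + 1),
        (p : MvPolynomial (ℕ ⊕ ℕ) ℚ) ^ i * (X (Sum.inl i)) ^ (p ^ (n - i)) := by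
    intro n
    have h := congrArg (aeval fQ) (wittStructureRat_prop p (X 0 - X 1 : MvPolynomial (Fin 2) ℚ) n)
    rw [aeval_bind₁, aeval_bind₁, aeval_wittPolynomial] at h
    rw [map_sub, aeval_X, aeval_X, aeval_rename, aeval_rename, aeval_wittPolynomial,
      aeval_wittPolynomial] at h
    convert h using 2 <;> simp [hfQ, Function.comp]
  -- Q = S by strong induction
  have hQS : ∀ n, Q n = S n := by
    intro n
    induction n using Nat.strong_induction_on with
    | _ n ih =>
      have h1 : ∑ i ∈ Finset.range (n + 1),
          (p : MvPolynomial (ℕ ⊕ ℕ) ℚ) ^ i * (Q i) ^ (p ^ (n - i)) =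
          ∑ i ∈ Finset.range (n + 1),
          (p : MvPolynomial (ℕ ⊕ ℕ) ℚ) ^ i * (S i) ^ (p ^ (n - i)) := by
        rw [hghostS n]
        have := hQ n
        linear_combination -this
      rw [Finset.sum_range_succ, Finset.sum_range_succ] at h1
      have h2 : ∑ i ∈ Finset.range n,
          (p : MvPolynomial (ℕ ⊕ ℕ) ℚ) ^ i * (Q i) ^ (p ^ (n - i)) =
          ∑ i ∈ Finset.range n,
          (p : MvPolynomial (ℕ ⊕ ℕ) ℚ) ^ i * (S i) ^ (p ^ (n - i)) := by
        refine Finset.sum_congr rfl fun i hi => ?_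
        rw [ih i (Finset.mem_range.mp hi)]
      rw [h2] at h1
      have h3 : (p : MvPolynomial (ℕ ⊕ ℕ) ℚ) ^ n * (Q n) ^ (p ^ (n - n)) =
          (p : MvPolynomial (ℕ ⊕ ℕ) ℚ) ^ n * (S n) ^ (p ^ (n - n)) := by
        linear_combination h1
      rw [Nat.sub_self, pow_zero, pow_one, pow_one] at h3
      have hpne : (p : MvPolynomial (ℕ ⊕ ℕ) ℚ) ^ n ≠ 0 :=
        pow_ne_zero _ (Nat.cast_ne_zero.mpr hp.ne_zero)
      exact mul_left_cancel₀ hpne h3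
  -- membership
  intro n
  refine ⟨q n, by rw [hmapq, hQS], ?_⟩
  set s : Set (ℕ ⊕ ℕ) := {v | ∃ j ≤ n, v = Sum.inr j} with hs
  have hset : {P : MvPolynomial (ℕ ⊕ ℕ) ℤ | ∃ j ≤ n, P = X (Sum.inr j)} =
      MvPolynomial.X '' s := by
    ext P
    constructor
    · rintro ⟨j, hj, rfl⟩; exact ⟨Sum.inr j, ⟨j, hj, rfl⟩, rfl⟩
    · rintro ⟨v, ⟨j, hj, rfl⟩, rfl⟩; exact ⟨j, hj, rfl⟩
  rw [hset]
  letI : DecidablePred (· ∈ s) := fun v => Classical.propDecidable _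
  set g : (ℕ ⊕ ℕ) → MvPolynomial (ℕ ⊕ ℕ) ℤ := fun v => if v ∈ s then 0 else X v with hgdef
  have hginl : ∀ i, g (Sum.inl i) = X (Sum.inl i) := by
    intro i
    rw [hgdef]
    exact if_neg (by rintro ⟨j, hj, h⟩; simp at h)
  have hginr : ∀ i ≤ n, g (Sum.inr i) = 0 := by
    intro i hi
    rw [hgdef]
    exact if_pos ⟨i, hi, rfl⟩
  have hzero : aeval g (q n) = 0 := by
    have hcomp : aeval g (q n) =
        aeval (fun w : Fin 2 × ℕ => aeval g (fZ w)) (WittVector.wittSub p n) :=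
      aeval_bind₁ g fZ (WittVector.wittSub p n)
    have hcong : aeval (fun w : Fin 2 × ℕ => aeval g (fZ w)) (WittVector.wittSub p n)
        = aeval (fun w : Fin 2 × ℕ => (X (Sum.inl w.2) : MvPolynomial (ℕ ⊕ ℕ) ℤ))
            (WittVector.wittSub p n) := by
      show (aeval _ : _ →ₐ[ℤ] _).toRingHom _ = (aeval _ : _ →ₐ[ℤ] _).toRingHom _
      refine MvPolynomial.hom_congr_vars ?_ ?_ rfl
      · ext1
        simp [algebraMap_eq]
      · intro w hw _
        obtain ⟨b, i⟩ := w
        have hi : i ≤ n := by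
          have h2 := WittVector.wittSub_vars p n hw
          have := (Finset.mem_product.mp h2).2
          simpa [Nat.lt_succ_iff] using this
        fin_cases b <;>
          simp [hfZ, hginl, hginr i hi]
    rw [hcomp, hcong]
    -- Witt vector argument: x - x = 0
    letI : Fact p.Prime := ⟨hp⟩
    set x : WittVector p (MvPolynomial (ℕ ⊕ ℕ) ℤ) :=
      WittVector.mk p (fun i => X (Sum.inl i)) with hx
    have h0 := WittVector.sub_coeff x x n
    rw [sub_self, WittVector.zero_coeff] at h0
    have huncurry : Function.uncurry ![x.coeff, x.coeff] =
        fun w : Fin 2 × ℕ => (X (Sum.inl w.2) : MvPolynomial (ℕ ⊕ ℕ) ℤ) := by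
      funext w
      obtain ⟨b, i⟩ := w
      fin_cases b <;> simp [Function.uncurry, hx, WittVector.coeff_mk]
    rw [WittVector.peval, huncurry] at h0
    exact h0.symm
  have hspan := aux_span s (q n)
  rwa [hzero, sub_zero] at hspan
end

section
/- Let p be a prime and let Q_n ∈ ℤ[X_0,…,X_n,Y_0,…,Y_n] be defined by the recurrence ∑_{i=0}^{n} p^i (X_i(1+Y_i))^{p^{n-i}} = ∑_{i=0}^{n} p^i X_i^{p^{n-i}} + ∑_{i=0}^{n} p^i Q_i^{p^{n-i}}. Then the difference Q_n − ∑_{i=0}^{n} X_i^{p^{n-i}} Y_i belongs to the ideal generated by the products Y_i Y_j for 0 ≤ i, j ≤ n. -/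
open MvPolynomial

/-!
Let `J` be the ideal generated by `Y_0, …, Y_n`. By strong induction,
`Q_i ≡ ∑_{j ≤ i} X_j^{p^{i-j}} Y_j` modulo `J²` for `i < n`, so `Q_i ∈ J` and `Q_i^{p^{n-i}} ∈ J²`.
Modulo `J²` the binomial theorem gives
`(X_i(1+Y_i))^{p^{n-i}} ≡ X_i^{p^{n-i}} + p^{n-i} X_i^{p^{n-i}} Y_i`, so the recurrence reduces to
`p^n (Q_n - ∑_i X_i^{p^{n-i}} Y_i) ∈ J²`. Finally `J²` is a monomial ideal, so membership depends
only on the support, which multiplication by the nonzero integer `p^n` does not change.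
-/

theorem Ideal.span_image_sq {A ι : Type*} [CommSemiring A] (f : ι → A) (t : Set ι) :
    Ideal.span (f '' t) ^ 2 = Ideal.span {a | ∃ i ∈ t, ∃ j ∈ t, a = f i * f j} := by
  rw [sq, Ideal.span_mul_span']
  congr 1
  ext a
  simp only [Set.mem_mul, Set.mem_image, Set.mem_ofPred_eq]
  grind

namespace MvPolynomial

variable {σ R : Type*} [CommSemiring R]

theorem smul_mem_span_monomial_image_iff {S : Type*} [Semiring S] [IsDomain S] [Module S R]
    [Module.IsTorsionFree S R] {a : S} (ha : a ≠ 0) {f : MvPolynomial σ R}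
    {s : Set (σ →₀ ℕ)} :
    a • f ∈ Ideal.span ((fun d => monomial d (1 : R)) '' s) ↔
      f ∈ Ideal.span ((fun d => monomial d (1 : R)) '' s) := by
  simp only [mem_ideal_span_monomial_image, support_smul_eq ha]

theorem span_X_image_sq (s : Set σ) :
    Ideal.span (X '' s : Set (MvPolynomial σ R)) ^ 2 =
      Ideal.span ((fun d => monomial d (1 : R)) ''
        {d | ∃ i ∈ s, ∃ j ∈ s, d = Finsupp.single i 1 + Finsupp.single j 1}) := by
  rw [Ideal.span_image_sq]
  congr 1
  ext a
  simp only [Set.mem_ofPred_eq, Set.mem_image, X, monomial_mul, one_mul]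
  grind

theorem smul_mem_span_X_image_sq_iff {S : Type*} [Semiring S] [IsDomain S] [Module S R]
    [Module.IsTorsionFree S R] {a : S} (ha : a ≠ 0) {f : MvPolynomial σ R} {s : Set σ} :
    a • f ∈ Ideal.span (X '' s : Set (MvPolynomial σ R)) ^ 2 ↔
      f ∈ Ideal.span (X '' s : Set (MvPolynomial σ R)) ^ 2 := by
  rw [span_X_image_sq, smul_mem_span_monomial_image_iff ha]

end MvPolynomial

section Ghost

variable {A : Type*} [CommRing A]

def ghostComponent (p : ℕ) (a : ℕ → A) (n : ℕ) : A :=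
  ∑ i ∈ Finset.range (n + 1), (p : A) ^ i * a i ^ p ^ (n - i)

def linearTerm (p : ℕ) (x y : ℕ → A) (n : ℕ) : A :=
  ∑ i ∈ Finset.range (n + 1), x i ^ p ^ (n - i) * y i

theorem ghostComponent_eq_sum_range_add (p : ℕ) (a : ℕ → A) (n : ℕ) :
    ghostComponent p a n =
      ∑ i ∈ Finset.range n, (p : A) ^ i * a i ^ p ^ (n - i) + (p : A) ^ n * a n := by
  rw [ghostComponent, Finset.sum_range_succ, Nat.sub_self, pow_zero, pow_one]

theorem ghostComponent_mul_one_add_sub (p : ℕ) (x y : ℕ → A) (n : ℕ) :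
    ghostComponent p (fun i => x i * (1 + y i)) n - ghostComponent p x n -
        (p : A) ^ n * linearTerm p x y n =
      ∑ i ∈ Finset.range (n + 1), (p : A) ^ i *
        (x i ^ p ^ (n - i) * ((1 + y i) ^ p ^ (n - i) - 1 - ((p ^ (n - i) : ℕ) : A) * y i)) := by
  rw [ghostComponent, ghostComponent, linearTerm, Finset.mul_sum, ← Finset.sum_sub_distrib,
    ← Finset.sum_sub_distrib]
  refine Finset.sum_congr rfl fun i hi => ?_
  have hpow : (p : A) ^ n = (p : A) ^ i * (p : A) ^ (n - i) := by
    rw [← pow_add, Nat.add_sub_cancel' (Finset.mem_range_succ_iff.mp hi)]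
  rw [hpow, mul_pow]
  push_cast
  ring

theorem one_add_pow_sub_mem_sq {J : Ideal A} {y : A} (hy : y ∈ J) (m : ℕ) :
    (1 + y) ^ m - 1 - (m : A) * y ∈ J ^ 2 := by
  induction m with
  | zero => simp
  | succ m ih =>
    have hyy : (m : A) * y ^ 2 ∈ J ^ 2 := Ideal.mul_mem_left _ _ (Ideal.pow_mem_pow hy 2)
    have h := add_mem (Ideal.mul_mem_left _ (1 + y) ih) hyy
    convert h using 1
    push_cast
    ring

theorem pow_mul_sub_linearTerm_mem_sq {J : Ideal A} {p n : ℕ} (hp : 2 ≤ p) {x y Q : ℕ → A}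
    (hy : ∀ i ≤ n, y i ∈ J) (hQ : ∀ i < n, Q i - linearTerm p x y i ∈ J ^ 2)
    (hghost : ghostComponent p (fun i => x i * (1 + y i)) n =
      ghostComponent p x n + ghostComponent p Q n) :
    (p : A) ^ n * (Q n - linearTerm p x y n) ∈ J ^ 2 := by
  have hQJ : ∀ i < n, Q i ∈ J := fun i hi => by
    have hL : linearTerm p x y i ∈ J := Ideal.sum_mem _ fun j hj =>
      Ideal.mul_mem_left _ _ (hy j (by grind))
    simpa using add_mem (Ideal.pow_le_self two_ne_zero (hQ i hi)) hL
  have hQpow : ∀ i < n, Q i ^ p ^ (n - i) ∈ J ^ 2 := fun i hi =>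
    Ideal.pow_le_pow_right (le_trans hp (Nat.le_self_pow (by omega) p))
      (Ideal.pow_mem_pow (hQJ i hi) _)
  have key : (p : A) ^ n * (Q n - linearTerm p x y n) =
      (ghostComponent p (fun i => x i * (1 + y i)) n - ghostComponent p x n -
        (p : A) ^ n * linearTerm p x y n) -
      ∑ i ∈ Finset.range n, (p : A) ^ i * Q i ^ p ^ (n - i) := by
    rw [hghost, ghostComponent_eq_sum_range_add p Q]
    ring
  rw [key, ghostComponent_mul_one_add_sub]
  exact sub_mem
    (Ideal.sum_mem _ fun i _ => Ideal.mul_mem_left _ _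
      (Ideal.mul_mem_left _ _ (one_add_pow_sub_mem_sq (hy i (by grind)) _)))
    (Ideal.sum_mem _ fun i hi => Ideal.mul_mem_left _ _ (hQpow i (Finset.mem_range.mp hi)))

end Ghost

/-- Let `p` be a prime and let `Q n ∈ ℤ[X_0,…,X_n,Y_0,…,Y_n]` be defined
by the recurrence
`∑_{i=0}^{n} p^i (X_i(1+Y_i))^{p^{n-i}} = ∑_{i=0}^{n} p^i X_i^{p^{n-i}} + ∑_{i=0}^{n} p^i Q_i^{p^{n-i}}`.
Then `Q n − ∑_{i=0}^{n} X_i^{p^{n-i}} Y_i` belongs to the ideal generated by the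
products `Y_i Y_j` for `0 ≤ i, j ≤ n`.
Here `X i` is `X (Sum.inl i)` and `Y i` is `X (Sum.inr i)`. -/
theorem stmt1 (p : ℕ) (hp : p.Prime) (Q : ℕ → MvPolynomial (ℕ ⊕ ℕ) ℤ)
    (hQ : ∀ n : ℕ,
      ∑ i ∈ Finset.range (n + 1),
        (p : MvPolynomial (ℕ ⊕ ℕ) ℤ) ^ i *
          (X (Sum.inl i) * (1 + X (Sum.inr i))) ^ (p ^ (n - i)) =
      ∑ i ∈ Finset.range (n + 1),
        (p : MvPolynomial (ℕ ⊕ ℕ) ℤ) ^ i * (X (Sum.inl i)) ^ (p ^ (n - i)) +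
      ∑ i ∈ Finset.range (n + 1),
        (p : MvPolynomial (ℕ ⊕ ℕ) ℤ) ^ i * (Q i) ^ (p ^ (n - i))) :
    ∀ n : ℕ,
      Q n - ∑ i ∈ Finset.range (n + 1), (X (Sum.inl i)) ^ (p ^ (n - i)) * X (Sum.inr i)
        ∈ Ideal.span {P : MvPolynomial (ℕ ⊕ ℕ) ℤ |
            ∃ i ≤ n, ∃ j ≤ n, P = X (Sum.inr i) * X (Sum.inr j)} := by
  let J (m : ℕ) : Ideal (MvPolynomial (ℕ ⊕ ℕ) ℤ) := Ideal.span (X '' (Sum.inr '' Set.Iic m))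
  have hJ (m : ℕ) : Ideal.span {P : MvPolynomial (ℕ ⊕ ℕ) ℤ |
      ∃ i ≤ m, ∃ j ≤ m, P = X (Sum.inr i) * X (Sum.inr j)} = J m ^ 2 := by
    simp only [J, Set.image_image, Ideal.span_image_sq]
    rfl
  intro n
  induction n using Nat.strong_induction_on with
  | _ n ih =>
  have hmono {i : ℕ} (hi : i < n) : J i ^ 2 ≤ J n ^ 2 :=
    Ideal.pow_right_mono (Ideal.span_mono (Set.image_mono (Set.image_mono
      (Set.Iic_subset_Iic.mpr hi.le)))) 2
  have key := pow_mul_sub_linearTerm_mem_sq (J := J n) hp.two_le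
    (fun i hi => Ideal.subset_span ⟨_, ⟨i, hi, rfl⟩, rfl⟩)
    (fun i hi => hmono hi (hJ i ▸ ih i hi)) (hQ n)
  rw [hJ, ← smul_mem_span_X_image_sq_iff (pow_ne_zero n (Int.natCast_ne_zero.mpr hp.ne_zero)),
    zsmul_eq_mul]
  exact_mod_cast key
end

section
/- Let p be a prime and Q_n ∈ ℤ[X_0,…,X_n,Y_0,…,Y_n] as determined by the recurrence ∑ p^i (X_i(1+Y_i))^{p^{n-i}} = ∑ p^i X_i^{p^{n-i}} + ∑ p^i Q_i^{p^{n-i}}. If one assigns weight p^i to the variable X_i and weight 0 to Y_i, then Q_n is homogeneous of weight p^n. -/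
open MvPolynomial

private lemma wh_pow {σ : Type*} {w : σ → ℕ} {φ : MvPolynomial σ ℤ} {m : ℕ}
    (h : φ.IsWeightedHomogeneous w m) (k : ℕ) :
    (φ ^ k).IsWeightedHomogeneous w (k * m) := by
  induction k with
  | zero => simpa using isWeightedHomogeneous_one ℤ w
  | succ k ih =>
    rw [pow_succ]
    simpa [add_mul] using ih.mul h

private lemma wh_neg {σ : Type*} {w : σ → ℕ} {φ : MvPolynomial σ ℤ} {m : ℕ}
    (h : φ.IsWeightedHomogeneous w m) : (-φ).IsWeightedHomogeneous w m := by
  intro d hd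
  exact h (by simpa using hd)

private lemma wh_cancel {σ : Type*} {w : σ → ℕ} {φ : MvPolynomial σ ℤ} {m : ℕ} {a : ℤ}
    (ha : a ≠ 0) (h : (C a * φ).IsWeightedHomogeneous w m) :
    φ.IsWeightedHomogeneous w m := by
  intro d hd
  exact h (by rw [coeff_C_mul]; exact mul_ne_zero ha hd)

/-- Let `p` be a prime and `Q n ∈ ℤ[X_0,…,X_n,Y_0,…,Y_n]` as determined by the
recurrence `∑ p^i (X_i(1+Y_i))^{p^{n-i}} = ∑ p^i X_i^{p^{n-i}} + ∑ p^i Q_i^{p^{n-i}}`.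
If one assigns weight `p^i` to the variable `X_i` and weight `0` to `Y_i`, then `Q n`
is (weighted) homogeneous of weight `p^n`.
Here `X i` is `X (Sum.inl i)` and `Y i` is `X (Sum.inr i)`. -/
theorem stmt2 (p : ℕ) (hp : p.Prime) (Q : ℕ → MvPolynomial (ℕ ⊕ ℕ) ℤ)
    (hQ : ∀ n : ℕ,
      ∑ i ∈ Finset.range (n + 1),
        (p : MvPolynomial (ℕ ⊕ ℕ) ℤ) ^ i *
          (X (Sum.inl i) * (1 + X (Sum.inr i))) ^ (p ^ (n - i)) =
      ∑ i ∈ Finset.range (n + 1),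
        (p : MvPolynomial (ℕ ⊕ ℕ) ℤ) ^ i * (X (Sum.inl i)) ^ (p ^ (n - i)) +
      ∑ i ∈ Finset.range (n + 1),
        (p : MvPolynomial (ℕ ⊕ ℕ) ℤ) ^ i * (Q i) ^ (p ^ (n - i))) :
    ∀ n : ℕ,
      (Q n).IsWeightedHomogeneous
        (Sum.elim (fun i : ℕ => p ^ i) (fun _ : ℕ => 0)) (p ^ n) := by
  intro n
  induction n using Nat.strong_induction_on with
  | _ n IH =>
  set w : ℕ ⊕ ℕ → ℕ := Sum.elim (fun i : ℕ => p ^ i) (fun _ : ℕ => 0) with hw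
  have hpC : ∀ i : ℕ, ((p : MvPolynomial (ℕ ⊕ ℕ) ℤ) ^ i).IsWeightedHomogeneous w 0 := by
    intro i
    have : (p : MvPolynomial (ℕ ⊕ ℕ) ℤ) ^ i = C ((p : ℤ) ^ i) := by
      rw [map_pow, map_natCast (C : ℤ →+* MvPolynomial (ℕ ⊕ ℕ) ℤ)]
    rw [this]; exact isWeightedHomogeneous_C w _
  have hpn : ∀ i, i < n + 1 → p ^ (n - i) * p ^ i = p ^ n := by
    intro i hi
    rw [← pow_add, Nat.sub_add_cancel (Nat.lt_succ_iff.mp hi)]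
  have key : C ((p : ℤ) ^ n) * Q n =
      (∑ i ∈ Finset.range (n + 1),
        (p : MvPolynomial (ℕ ⊕ ℕ) ℤ) ^ i *
          (X (Sum.inl i) * (1 + X (Sum.inr i))) ^ (p ^ (n - i)))
      - (∑ i ∈ Finset.range (n + 1),
        (p : MvPolynomial (ℕ ⊕ ℕ) ℤ) ^ i * (X (Sum.inl i)) ^ (p ^ (n - i)))
      - (∑ i ∈ Finset.range n,
        (p : MvPolynomial (ℕ ⊕ ℕ) ℤ) ^ i * (Q i) ^ (p ^ (n - i))) := by
    have h := hQ n
    rw [Finset.sum_range_succ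
      (fun i => (p : MvPolynomial (ℕ ⊕ ℕ) ℤ) ^ i * (Q i) ^ (p ^ (n - i)))] at h
    simp only [Nat.sub_self, pow_zero, pow_one] at h
    rw [map_pow, map_natCast (C : ℤ →+* MvPolynomial (ℕ ⊕ ℕ) ℤ)]
    linear_combination -h
  have hkey : (C ((p : ℤ) ^ n) * Q n).IsWeightedHomogeneous w (p ^ n) := by
    rw [key, sub_eq_add_neg, sub_eq_add_neg]
    apply MvPolynomial.IsWeightedHomogeneous.add
    apply MvPolynomial.IsWeightedHomogeneous.add
    · apply IsWeightedHomogeneous.sum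
      intro i hi
      have h1 : (X (Sum.inl i) * (1 + X (Sum.inr i)) :
          MvPolynomial (ℕ ⊕ ℕ) ℤ).IsWeightedHomogeneous w (p ^ i) := by
        have hx : (X (Sum.inl i) : MvPolynomial (ℕ ⊕ ℕ) ℤ).IsWeightedHomogeneous w (p ^ i) :=
          isWeightedHomogeneous_X ℤ w (Sum.inl i)
        have hy : ((1 + X (Sum.inr i)) :
            MvPolynomial (ℕ ⊕ ℕ) ℤ).IsWeightedHomogeneous w 0 :=
          (isWeightedHomogeneous_one ℤ w).add (isWeightedHomogeneous_X ℤ w (Sum.inr i))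
        simpa using hx.mul hy
      have := (hpC i).mul (wh_pow h1 (p ^ (n - i)))
      simpa [hpn i (Finset.mem_range.mp hi)] using this
    · apply wh_neg
      apply IsWeightedHomogeneous.sum
      intro i hi
      have := (hpC i).mul (wh_pow (isWeightedHomogeneous_X ℤ w (Sum.inl i)) (p ^ (n - i)))
      simpa [hw, hpn i (Finset.mem_range.mp hi)] using this
    · apply wh_neg
      apply IsWeightedHomogeneous.sum
      intro i hi
      have := (hpC i).mul (wh_pow (IH i (Finset.mem_range.mp hi)) (p ^ (n - i)))
      simpa [hpn i (Nat.lt_succ_of_lt (Finset.mem_range.mp hi))] using this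
  exact wh_cancel (pow_ne_zero n (by exact_mod_cast hp.ne_zero)) hkey
end

section
/- Let K be a discretely valued field of characteristic p > 0 with normalized valuation v. For integers m ≥ 0 and n, let fil_n W_{m+1}(K) be the set of Witt vectors (x_0,…,x_m) ∈ W_{m+1}(K) such that p^{m−i} v(x_i) ≥ −n for all 0 ≤ i ≤ m (with the convention v(0) = +∞). Then fil_n W_{m+1}(K) is a subgroup of the additive group of W_{m+1}(K). -/
open Multiplicative

section BKAux

open MvPolynomial Finset

private theorem myIWH_neg {σ R M : Type*} [CommRing R] [AddCommMonoid M] {w : σ → M}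
    {φ : MvPolynomial σ R} {m : M}
    (h : φ.IsWeightedHomogeneous w m) : (-φ).IsWeightedHomogeneous w m := fun d hd => by
  apply h (d := d); rwa [coeff_neg, neg_ne_zero] at hd

private theorem myIWH_pow {σ R M : Type*} [CommRing R] [AddCommMonoid M] {w : σ → M}
    {φ : MvPolynomial σ R} {m : M}
    (h : φ.IsWeightedHomogeneous w m) (k : ℕ) : (φ ^ k).IsWeightedHomogeneous w (k • m) := by
  induction k with
  | zero => simpa using MvPolynomial.isWeightedHomogeneous_one R w
  | succ k ih => rw [pow_succ, succ_nsmul]; exact ih.mul h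

private theorem weightW (p : ℕ) [Fact p.Prime] (b : Fin 2) (n : ℕ) :
    (MvPolynomial.rename (Prod.mk b) (wittPolynomial p ℚ n)).IsWeightedHomogeneous
      (fun v : Fin 2 × ℕ => p ^ v.2) (p ^ n) := by
  rw [wittPolynomial, map_sum]
  apply MvPolynomial.IsWeightedHomogeneous.sum
  intro i hi
  rw [rename_monomial]
  apply isWeightedHomogeneous_monomial
  rw [Finsupp.mapDomain_single, Finsupp.weight_apply, Finsupp.sum_single_index]
  · show p ^ (n - i) • p ^ i = p ^ n
    rw [smul_eq_mul, ← pow_add, Nat.sub_add_cancel (Nat.lt_succ_iff.mp (mem_range.mp hi))]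
  · exact zero_smul _ _

private theorem weightRat (p : ℕ) [Fact p.Prime] (n : ℕ) :
    (wittStructureRat p (X 0 + X 1 : MvPolynomial (Fin 2) ℚ) n).IsWeightedHomogeneous
      (fun v : Fin 2 × ℕ => p ^ v.2) (p ^ n) := by
  induction n using Nat.strong_induction_on with
  | _ n ih =>
    rw [wittStructureRat_rec]
    have h1 : ((bind₁ fun b : Fin 2 => rename (Prod.mk b) (wittPolynomial p ℚ n))
        (X 0 + X 1)).IsWeightedHomogeneous (fun v : Fin 2 × ℕ => p ^ v.2) (p ^ n) := by
      rw [map_add, bind₁_X_right, bind₁_X_right]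
      exact (weightW p 0 n).add (weightW p 1 n)
    have h2 : (∑ i ∈ range n, C ((p : ℚ) ^ i) *
        wittStructureRat p (X 0 + X 1 : MvPolynomial (Fin 2) ℚ) i ^
          p ^ (n - i)).IsWeightedHomogeneous (fun v : Fin 2 × ℕ => p ^ v.2) (p ^ n) := by
      apply MvPolynomial.IsWeightedHomogeneous.sum
      intro i hi
      have := (isWeightedHomogeneous_C (fun v : Fin 2 × ℕ => p ^ v.2) ((p : ℚ) ^ i)).mul
        (myIWH_pow (ih i (mem_range.mp hi)) (p ^ (n - i)))
      simpa [smul_eq_mul, zero_add, ← pow_add,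
        Nat.sub_add_cancel (le_of_lt (mem_range.mp hi))] using this
    have := (isWeightedHomogeneous_C (fun v : Fin 2 × ℕ => p ^ v.2) (1 / (p : ℚ) ^ n)).mul
      (h1.add (myIWH_neg h2))
    simpa [sub_eq_add_neg] using this

private theorem weightAdd (p : ℕ) [Fact p.Prime] (n : ℕ) :
    (WittVector.wittAdd p n).IsWeightedHomogeneous (fun v : Fin 2 × ℕ => p ^ v.2) (p ^ n) := by
  intro d hd
  apply weightRat p n (d := d)
  have : wittStructureRat p (X 0 + X 1 : MvPolynomial (Fin 2) ℚ) n =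
      MvPolynomial.map (Int.castRingHom ℚ) (WittVector.wittAdd p n) := by
    rw [WittVector.wittAdd, map_wittStructureInt]
    simp
  rw [this, coeff_map]
  simpa using hd

variable {K : Type*} [Field K] {Γ : Type*} [LinearOrderedCommGroupWithZero Γ]

private theorem myval_intCast_le_one (v : Valuation K Γ) (k : ℤ) : v (k : K) ≤ 1 := by
  have hnat : ∀ n : ℕ, v (n : K) ≤ 1 := by
    intro n
    induction n with
    | zero => simp only [Nat.cast_zero, Valuation.map_zero]; exact zero_le' (a := (1 : Γ))
    | succ n ih =>
      push_cast
      exact v.map_add_le ih (le_of_eq v.map_one)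
  rcases Int.natAbs_eq k with h | h
  · rw [h, Int.cast_natCast]; exact hnat _
  · rw [h, Int.cast_neg, Valuation.map_neg, Int.cast_natCast]; exact hnat _

private theorem mykey (p : ℕ) [Fact p.Prime] (v : Valuation K Γ) (g : Γ) (m i : ℕ) (him : i ≤ m)
    (φ : MvPolynomial (Fin 2 × ℕ) ℤ)
    (hφ : φ.IsWeightedHomogeneous (fun x : Fin 2 × ℕ => p ^ x.2) (p ^ i))
    (f : Fin 2 × ℕ → K)
    (hf : ∀ x : Fin 2 × ℕ, x.2 ≤ m → v (f x) ^ p ^ (m - x.2) ≤ g) :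
    v (MvPolynomial.aeval f φ) ^ p ^ (m - i) ≤ g := by
  have hp1 : 1 < p := (Fact.out : p.Prime).one_lt
  have hterm : ∀ d ∈ φ.support,
      v (algebraMap ℤ K (φ.coeff d) * ∏ x ∈ d.support, f x ^ d x) ^ p ^ (m - i) ≤ g := by
    intro d hd
    have hw : (Finsupp.weight (fun x : Fin 2 × ℕ => p ^ x.2)) d = p ^ i :=
      hφ (mem_support_iff.mp hd)
    have hsum : ∑ x ∈ d.support, d x * p ^ x.2 = p ^ i := by
      rw [← hw, Finsupp.weight_apply, Finsupp.sum]
      rfl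
    have h1 : v (algebraMap ℤ K (φ.coeff d) * ∏ x ∈ d.support, f x ^ d x) ≤
        v (∏ x ∈ d.support, f x ^ d x) := by
      rw [v.map_mul]
      have hc : algebraMap ℤ K (φ.coeff d) = ((φ.coeff d : ℤ) : K) := by simp
      calc v (algebraMap ℤ K (φ.coeff d)) * v (∏ x ∈ d.support, f x ^ d x)
          ≤ 1 * v (∏ x ∈ d.support, f x ^ d x) := by
            rw [hc]; exact mul_le_mul_left (myval_intCast_le_one v _) _
        _ = _ := one_mul _
    have h2 : v (∏ x ∈ d.support, f x ^ d x) ^ p ^ m ≤ g ^ p ^ i := by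
      rw [map_prod, ← Finset.prod_pow]
      have hle : ∀ x ∈ d.support, (v (f x ^ d x)) ^ p ^ m ≤ g ^ (d x * p ^ x.2) := by
        intro x hx
        have hxm : x.2 ≤ m := by
          refine le_trans ?_ him
          have hple : p ^ x.2 ≤ p ^ i := by
            calc p ^ x.2 ≤ d x * p ^ x.2 :=
                  Nat.le_mul_of_pos_left _ (Nat.pos_of_ne_zero (Finsupp.mem_support_iff.mp hx))
              _ ≤ ∑ y ∈ d.support, d y * p ^ y.2 := Finset.single_le_sum
                  (f := fun y => d y * p ^ y.2) (fun y _ => Nat.zero_le _) hx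
              _ = p ^ i := hsum
          exact (Nat.pow_le_pow_iff_right hp1).mp hple
        have heq : v (f x ^ d x) ^ p ^ m = (v (f x) ^ p ^ (m - x.2)) ^ (d x * p ^ x.2) := by
          rw [v.map_pow, ← pow_mul, ← pow_mul]
          congr 1
          rw [mul_comm (d x) (p ^ m), mul_left_comm, ← pow_add,
            Nat.sub_add_cancel hxm, mul_comm]
        rw [heq]
        exact pow_le_pow_left' (hf x hxm) _
      calc ∏ x ∈ d.support, v (f x ^ d x) ^ p ^ m
          ≤ ∏ x ∈ d.support, g ^ (d x * p ^ x.2) := Finset.prod_le_prod' hle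
        _ = g ^ ∑ x ∈ d.support, d x * p ^ x.2 := by rw [Finset.prod_pow_eq_pow_sum]
        _ = g ^ p ^ i := by rw [hsum]
    have h3 : (v (∏ x ∈ d.support, f x ^ d x) ^ p ^ (m - i)) ^ p ^ i ≤ g ^ p ^ i := by
      rw [← pow_mul, ← pow_add, Nat.sub_add_cancel him]
      exact h2
    have h4 : v (∏ x ∈ d.support, f x ^ d x) ^ p ^ (m - i) ≤ g :=
      (pow_le_pow_iff_left₀ zero_le' zero_le'
        (pow_ne_zero i (Fact.out : p.Prime).ne_zero)).mp h3
    exact le_trans (pow_le_pow_left' h1 _) h4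
  rw [MvPolynomial.aeval_def, MvPolynomial.eval₂_eq]
  rcases Finset.eq_empty_or_nonempty φ.support with h | h
  · rw [h, Finset.sum_empty, v.map_zero,
      zero_pow (pow_ne_zero _ (Fact.out : p.Prime).ne_zero)]
    exact zero_le'
  · obtain ⟨d₀, hd₀, hbeq⟩ := Finset.exists_mem_eq_sup' h
      (fun d => v (algebraMap ℤ K (φ.coeff d) * ∏ x ∈ d.support, f x ^ d x))
    have hvb : v (∑ d ∈ φ.support, algebraMap ℤ K (φ.coeff d) * ∏ x ∈ d.support, f x ^ d x) ≤
        v (algebraMap ℤ K (φ.coeff d₀) * ∏ x ∈ d₀.support, f x ^ d₀ x) := by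
      rw [← hbeq]
      exact v.map_sum_le fun d hd => Finset.le_sup'
        (f := fun d => v (algebraMap ℤ K (φ.coeff d) * ∏ x ∈ d.support, f x ^ d x)) hd
    exact le_trans (pow_le_pow_left' hvb _) (hterm d₀ hd₀)

end BKAux

/-- The Brylinski–Kato filtration `fil_n W_{m+1}(K)` on truncated Witt vectors of a
(discretely) valued field `K`: the set of `(x_0,…,x_m)` with `p^{m−i}·v(x_i) ≥ −n` for
all `i`.  Here the valuation is written multiplicatively, with values in
`WithZero (Multiplicative ℤ)`, so that the additive valuation of `x` is `≥ −n` iff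
`v x ≤ ofAdd n`; in particular `v 0 = 0` corresponds to additive valuation `+∞`. -/
def brylinskiKatoFil (p : ℕ) [Fact p.Prime] (K : Type*) [Field K]
    [Valued K (WithZero (Multiplicative ℤ))] (m : ℕ) (n : ℤ) :
    Set (TruncatedWittVector p (m + 1) K) :=
  {w | ∀ i : Fin (m + 1),
    (Valued.v (w.coeff i)) ^ (p ^ (m - i.val)) ≤
      ((Multiplicative.ofAdd n : Multiplicative ℤ) : WithZero (Multiplicative ℤ))}

/-- Let `K` be a discretely valued field of characteristic `p > 0`.
Then `fil_n W_{m+1}(K)` is a subgroup of the additive group of `W_{m+1}(K)`. -/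
theorem stmt4 (p : ℕ) [Fact p.Prime] (K : Type*) [Field K] [CharP K p]
    [Valued K (WithZero (Multiplicative ℤ))] (m : ℕ) (n : ℤ) :
    ∃ H : AddSubgroup (TruncatedWittVector p (m + 1) K),
      (H : Set (TruncatedWittVector p (m + 1) K)) = brylinskiKatoFil p K m n := by
  set g : WithZero (Multiplicative ℤ) :=
    ((Multiplicative.ofAdd n : Multiplicative ℤ) : WithZero (Multiplicative ℤ)) with hg
  set S : Set (TruncatedWittVector p (m + 1) K) := brylinskiKatoFil p K m n with hS
  have hp0 : p ≠ 0 := (Fact.out : p.Prime).ne_zero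
  -- zero
  have hzero : (0 : TruncatedWittVector p (m + 1) K) ∈ S := by
    intro i
    rw [TruncatedWittVector.coeff_zero, Valuation.map_zero, zero_pow (pow_ne_zero _ hp0)]
    exact zero_le'
  -- addition
  have hadd : ∀ a b : TruncatedWittVector p (m + 1) K, a ∈ S → b ∈ S → a + b ∈ S := by
    intro a b ha hb i
    have hab : a + b = WittVector.truncateFun (m + 1) (a.out + b.out) := by
      rw [WittVector.truncateFun_add, TruncatedWittVector.truncateFun_out,
        TruncatedWittVector.truncateFun_out]
    rw [hab, WittVector.coeff_truncateFun, WittVector.add_coeff]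
    show Valued.v ((MvPolynomial.aeval
      (Function.uncurry ![a.out.coeff, b.out.coeff])) (WittVector.wittAdd p i.val)) ^
        p ^ (m - i.val) ≤ g
    apply mykey p Valued.v g m i.val (Nat.lt_succ_iff.mp i.isLt) _ (weightAdd p i.val)
    rintro ⟨c, j⟩ hj
    have hjlt : j < m + 1 := Nat.lt_succ_of_le hj
    have hcoeff : ∀ (x : TruncatedWittVector p (m + 1) K), x.out.coeff j = x.coeff ⟨j, hjlt⟩ :=
      fun x => TruncatedWittVector.coeff_out x ⟨j, hjlt⟩
    fin_cases c
    · show Valued.v (a.out.coeff j) ^ p ^ (m - j) ≤ g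
      rw [hcoeff a]
      exact ha ⟨j, hjlt⟩
    · show Valued.v (b.out.coeff j) ^ p ^ (m - j) ≤ g
      rw [hcoeff b]
      exact hb ⟨j, hjlt⟩
  -- nsmul closure
  have hnsmul : ∀ (k : ℕ) (x : TruncatedWittVector p (m + 1) K), x ∈ S → k • x ∈ S := by
    intro k x hx
    induction k with
    | zero => simpa using hzero
    | succ k ih => rw [succ_nsmul]; exact hadd _ _ ih hx
  -- p^(m+1) kills everything
  have hppow : (p : TruncatedWittVector p (m + 1) K) ^ (m + 1) = 0 := by
    have : (p : TruncatedWittVector p (m + 1) K) ^ (m + 1) =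
        WittVector.truncate (m + 1) ((p : WittVector p K) ^ (m + 1)) := by
      rw [map_pow, map_natCast]
    rw [this]
    ext i
    rw [WittVector.coeff_truncate, TruncatedWittVector.coeff_zero]
    exact WittVector.coeff_p_pow_eq_zero (p := p) (R := K) (hj := Nat.ne_of_lt i.isLt)
  have hneg : ∀ x : TruncatedWittVector p (m + 1) K, x ∈ S → -x ∈ S := by
    intro x hx
    have h0 : (p ^ (m + 1)) • x = 0 := by
      rw [nsmul_eq_mul, Nat.cast_pow, hppow, zero_mul]
    have h1 : x + (p ^ (m + 1) - 1) • x = 0 := by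
      rw [← succ_nsmul', Nat.sub_add_cancel (Nat.one_le_pow _ _ (Nat.pos_of_ne_zero hp0))]
      exact h0
    have hxk : -x = (p ^ (m + 1) - 1) • x := (neg_eq_of_add_eq_zero_right h1)
    rw [hxk]
    exact hnsmul _ _ hx
  refine ⟨⟨⟨⟨S, ?_⟩, ?_⟩, ?_⟩, rfl⟩
  · exact fun ha hb => hadd _ _ ha hb
  · exact hzero
  · exact fun hx => hneg _ hx
end

section
/- Let K be a field of characteristic p > 0. The map W_{m+1}(K) → Ω^1_K defined by (x_0,…,x_m) ↦ ∑_{i=0}^{m} x_i^{p^{m−i}−1} dx_i (with the convention that a term is 0 when x_i = 0) is a homomorphism of additive groups, where Ω^1_K is the module of absolute Kähler differentials of K. -/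
/-!
Multiplying `∑ xᵢ^(p^(m-i)-1) dxᵢ` by `p ^ m` gives `d wₘ(x)`, the differential of the `m`-th
ghost component, and ghost components are additive. Over the Witt-addition polynomials with
integer coefficients this lets one cancel `p ^ m`, since the Kähler differentials of a polynomial
ring over `ℤ` are torsion free; specializing the resulting polynomial identity gives additivity
over any commutative ring, in particular over `K`.
-/

/-- The map `F^m d : W_{m+1}(K) → Ω¹_K`, `(x_0,…,x_m) ↦ ∑_{i=0}^m x_i^{p^{m−i}−1} dx_i`,
with values in the module of absolute Kähler differentials `Ω¹_K = Ω¹_{K/ℤ}`. -/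
noncomputable def FmD (p : ℕ) [Fact p.Prime] (K : Type*) [Field K] (m : ℕ)
    (w : TruncatedWittVector p (m + 1) K) : KaehlerDifferential ℤ K :=
  ∑ i : Fin (m + 1),
    (w.coeff i) ^ (p ^ (m - i.val) - 1) • (KaehlerDifferential.D ℤ K) (w.coeff i)

open Finset MvPolynomial KaehlerDifferential

/-- `F^m d` evaluated on the first `m + 1` components of a sequence. -/
noncomputable def frobeniusDiff (p : ℕ) (S : Type*) {A : Type*} [CommRing S] [CommRing A]
    [Algebra S A] (m : ℕ) (f : ℕ → A) : Ω[A⁄S] :=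
  ∑ i ∈ range (m + 1), f i ^ (p ^ (m - i) - 1) • D S A (f i)

section

variable (p : ℕ) (S : Type*) {A : Type*} [CommRing S] [CommRing A] [Algebra S A]

theorem pow_smul_frobeniusDiff (m : ℕ) (f : ℕ → A) :
    (p ^ m) • frobeniusDiff p S m f = D S A (aeval f (wittPolynomial p S m)) := by
  rw [frobeniusDiff, aeval_wittPolynomial, map_sum, smul_sum]
  refine sum_congr rfl fun i hi => ?_
  have hi : i ≤ m := Nat.lt_succ_iff.mp (mem_range.mp hi)
  rw [← Nat.cast_pow, ← nsmul_eq_mul, map_nsmul, Derivation.leibniz_pow, smul_smul,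
    ← pow_add, Nat.add_sub_cancel' hi]

theorem map_frobeniusDiff {B : Type*} [CommRing B] [Algebra S B] [Algebra A B]
    [IsScalarTower S A B] (m : ℕ) (f : ℕ → A) :
    KaehlerDifferential.map S S A B (frobeniusDiff p S m f) =
      frobeniusDiff p S m (algebraMap A B ∘ f) := by
  rw [frobeniusDiff, frobeniusDiff, map_sum]
  refine sum_congr rfl fun i _ => ?_
  rw [LinearMap.map_smul, map_D, ← algebraMap_smul B, map_pow, Function.comp_apply]

end

section

variable (p : ℕ) [Fact p.Prime]

local notation "R" => MvPolynomial (Fin 2 × ℕ) ℤ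

theorem frobeniusDiff_wittAdd (m : ℕ) :
    frobeniusDiff p ℤ m (WittVector.wittAdd p) =
      frobeniusDiff p ℤ m (fun i => (X (0, i) : R)) +
        frobeniusDiff p ℤ m (fun i => (X (1, i) : R)) := by
  have := (mvPolynomialBasis ℤ (Fin 2 × ℕ)).isTorsionFree
  have hpm : ((p ^ m : ℕ) : R) ≠ 0 := by simp [(Fact.out : p.Prime).ne_zero]
  apply smul_right_injective Ω[R⁄ℤ] hpm
  have hghost := wittStructureInt_prop p (X 0 + X 1 : MvPolynomial (Fin 2) ℤ) m
  rw [map_add, bind₁_X_right, bind₁_X_right, rename_eq_aeval, rename_eq_aeval] at hghost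
  dsimp only
  rw [Nat.cast_smul_eq_nsmul, Nat.cast_smul_eq_nsmul, smul_add, pow_smul_frobeniusDiff,
    pow_smul_frobeniusDiff, pow_smul_frobeniusDiff, ← map_add]
  exact congrArg (D ℤ R) hghost

theorem WittVector.frobeniusDiff_coeff_add {A : Type*} [CommRing A] (m : ℕ)
    (x y : WittVector p A) :
    frobeniusDiff p ℤ m (x + y).coeff =
      frobeniusDiff p ℤ m x.coeff + frobeniusDiff p ℤ m y.coeff := by
  let _ : Algebra R A := (aeval (Function.uncurry ![x.coeff, y.coeff])).toAlgebra
  have h := congrArg (KaehlerDifferential.map ℤ ℤ R A) (frobeniusDiff_wittAdd p m)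
  have hsum : algebraMap R A ∘ WittVector.wittAdd p = (x + y).coeff :=
    funext fun i => (x.add_coeff y i).symm
  have hx : algebraMap R A ∘ (fun i => X (0, i)) = x.coeff := funext fun i => aeval_X _ (0, i)
  have hy : algebraMap R A ∘ (fun i => X (1, i)) = y.coeff := funext fun i => aeval_X _ (1, i)
  rwa [map_add, map_frobeniusDiff, map_frobeniusDiff, map_frobeniusDiff, hsum, hx,
    hy] at h

end

theorem FmD_truncate (p : ℕ) [Fact p.Prime] (K : Type*) [Field K] (m : ℕ) (x : WittVector p K) :
    FmD p K m (WittVector.truncate (m + 1) x) = frobeniusDiff p ℤ m x.coeff := by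
  rw [FmD, frobeniusDiff, ← Fin.sum_univ_eq_sum_range]
  simp only [WittVector.coeff_truncate]

theorem stmt6_general (p : ℕ) [Fact p.Prime] (K : Type*) [Field K] (m : ℕ)
    (a b : TruncatedWittVector p (m + 1) K) :
    FmD p K m (a + b) = FmD p K m a + FmD p K m b := by
  obtain ⟨x, rfl⟩ := WittVector.truncate_surjective p (m + 1) K a
  obtain ⟨y, rfl⟩ := WittVector.truncate_surjective p (m + 1) K b
  simp only [← map_add, FmD_truncate, WittVector.frobeniusDiff_coeff_add]

/-- Let `K` be a field of characteristic `p > 0`.  The map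
`W_{m+1}(K) → Ω¹_K`, `(x_0,…,x_m) ↦ ∑_{i=0}^m x_i^{p^{m−i}−1} dx_i`, is a homomorphism
of additive groups (the term for `x_i = 0` vanishes, since `d0 = 0`). -/
theorem stmt6 (p : ℕ) [Fact p.Prime] (K : Type*) [Field K] [CharP K p] (m : ℕ)
    (a b : TruncatedWittVector p (m + 1) K) :
    FmD p K m (a + b) = FmD p K m a + FmD p K m b :=
  stmt6_general p K m a b
end

section
/- Let K be a complete discretely valued field of characteristic p > 0 with normalized valuation v, and let fil_n W_{m+1}(K) be the Brylinski–Kato filtration (p^{m−i} v(x_i) ≥ −n for all i). Let s ≥ 1 be an integer and y ∈ fil_s W_{m+1}(K) \ fil_{s−1} W_{m+1}(K). Then F(y) − y ∈ fil_{ps} W_{m+1}(K) \ fil_{ps−1} W_{m+1}(K), where F is the Frobenius (componentwise p-th power) on W_{m+1}(K). -/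
open Multiplicative

/-- The Frobenius on `W_{m+1}(K)` for `K` of characteristic `p`: the componentwise
`p`-th power map. -/
def wittFrobenius (p : ℕ) [Fact p.Prime] (K : Type*) [Field K] (m : ℕ)
    (w : TruncatedWittVector p (m + 1) K) : TruncatedWittVector p (m + 1) K :=
  TruncatedWittVector.mk p (fun i => w.coeff i ^ p)

/-! Write `v` additively. Give the Witt variable `X_{b,j}` weight `p^j`; the addition and
subtraction polynomials `S_i` are then weighted homogeneous of degree `p^i`, since the ghost
components are. The condition defining `fil_n` is equivalent to `p^m v(x_j) ≥ -n p^j` for every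
`j`, so the ultrametric inequality gives `p^m v(S_i(x, y)) ≥ -n p^i` for `x, y ∈ fil_n`: each
`fil_n` is closed under `+` and `-`.

Now `F(y) ∈ fil_{ps}` and `y ∈ fil_s ⊆ fil_{ps}` give `F(y) - y ∈ fil_{ps}`. If `F(y) - y` were in
`fil_{ps-1}`, then so would be `F(y) = (F(y) - y) + y`, because `s ≤ ps - 1`. But some coordinate
has `p^{m-i} v(y_i) < -(s - 1)`, i.e. `≤ -s` as the valuation is discrete, and then
`p^{m-i} v(y_i^p) ≤ -ps < -(ps - 1)`. -/

open MvPolynomial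

namespace MvPolynomial.IsWeightedHomogeneous

variable {R σ τ M : Type*} [CommSemiring R] [AddCommMonoid M]

theorem nsmul_weight {w : σ → M} {φ : MvPolynomial σ R} {n : M}
    (hφ : φ.IsWeightedHomogeneous w n) (c : ℕ) :
    φ.IsWeightedHomogeneous (c • w) (c • n) := by
  intro d hd
  rw [← hφ hd, Finsupp.weight_apply, Finsupp.weight_apply, Finsupp.smul_sum]
  simp only [Pi.smul_apply, smul_comm c]

theorem aeval {w : σ → M} {w' : τ → M} {φ : MvPolynomial σ R} {n : M}
    (hφ : φ.IsWeightedHomogeneous w n) (f : σ → MvPolynomial τ R)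
    (hf : ∀ i, (f i).IsWeightedHomogeneous w' (w i)) :
    (MvPolynomial.aeval f φ).IsWeightedHomogeneous w' n := by
  induction hφ using IsWeightedHomogeneous.induction_on with
  | zero => simpa using isWeightedHomogeneous_zero R w' n
  | add _ _ _ _ hp hq => simpa using hp.add hq
  | monomial d r hr =>
    rw [aeval_monomial, ← hr, Finsupp.weight_apply, Finsupp.prod, Finsupp.sum,
      algebraMap_eq, ← zero_add (∑ _ ∈ _, _)]
    exact (isWeightedHomogeneous_C w' r).mul
      (.prod _ _ _ fun i _ => (hf i).pow (d i))

theorem rename {w' : τ → M} {φ : MvPolynomial σ R} {n : M} (f : σ → τ)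
    (hφ : φ.IsWeightedHomogeneous (w' ∘ f) n) :
    (MvPolynomial.rename f φ).IsWeightedHomogeneous w' n := by
  rw [rename_eq_aeval]
  exact hφ.aeval _ fun i => isWeightedHomogeneous_X R w' (f i)

end MvPolynomial.IsWeightedHomogeneous

theorem MvPolynomial.IsHomogeneous.isWeightedHomogeneous_const {R σ : Type*} [CommSemiring R]
    {φ : MvPolynomial σ R} {d : ℕ} (hφ : φ.IsHomogeneous d) (c : ℕ) :
    φ.IsWeightedHomogeneous (fun _ => c) (c * d) := by
  intro e he
  rw [← hφ he, Finsupp.weight_apply, Finsupp.weight_apply, Finsupp.sum, Finsupp.sum,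
    Finset.mul_sum]
  simp [mul_comm]

section WittPolynomials

variable (p : ℕ)

theorem isWeightedHomogeneous_wittPolynomial (R : Type*) [CommRing R] (n : ℕ) :
    (wittPolynomial p R n).IsWeightedHomogeneous (p ^ ·) (p ^ n) := by
  refine .sum _ _ _ fun i hi => isWeightedHomogeneous_monomial _ _ _ ?_
  rw [Finsupp.weight_single, smul_eq_mul, ← pow_add,
    Nat.sub_add_cancel (Nat.lt_succ_iff.mp (Finset.mem_range.mp hi))]

theorem isWeightedHomogeneous_xInTermsOfW (R : Type*) [CommRing R] [Invertible (p : R)] (n : ℕ) :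
    (xInTermsOfW p R n).IsWeightedHomogeneous (p ^ ·) (p ^ n) := by
  induction n using Nat.strong_induction_on with
  | _ n ih =>
    rw [xInTermsOfW_eq, ← add_zero (p ^ n)]
    refine .mul (.sub (isWeightedHomogeneous_X R _ n) (.sum _ _ _ fun i hi => ?_))
      (isWeightedHomogeneous_C _ _)
    have hin : i ≤ n := (Finset.mem_range.mp hi).le
    simpa [smul_eq_mul, ← pow_add, Nat.sub_add_cancel hin] using
      ((ih i (Finset.mem_range.mp hi)).pow (p ^ (n - i))).C_mul ((p : R) ^ i)

theorem isWeightedHomogeneous_wittStructureRat [Fact p.Prime] {idx : Type*}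
    {Φ : MvPolynomial idx ℚ} {d : ℕ} (hΦ : Φ.IsHomogeneous d) (n : ℕ) :
    (wittStructureRat p Φ n).IsWeightedHomogeneous (fun q : idx × ℕ => p ^ q.2) (d * p ^ n) := by
  refine ((isWeightedHomogeneous_xInTermsOfW p ℚ n).nsmul_weight d).aeval _ fun k => ?_
  have hW (i : idx) : (rename (Prod.mk i) (wittPolynomial p ℚ k)).IsWeightedHomogeneous
      (fun q : idx × ℕ => p ^ q.2) (p ^ k) :=
    (isWeightedHomogeneous_wittPolynomial p ℚ k).rename (Prod.mk i)
  have h := (hΦ.isWeightedHomogeneous_const (p ^ k)).aeval _ hW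
  rwa [mul_comm] at h

theorem isWeightedHomogeneous_wittStructureInt [Fact p.Prime] {idx : Type*}
    {Φ : MvPolynomial idx ℤ} {d : ℕ} (hΦ : Φ.IsHomogeneous d) (n : ℕ) :
    (wittStructureInt p Φ n).IsWeightedHomogeneous (fun q : idx × ℕ => p ^ q.2) (d * p ^ n) := by
  intro e he
  refine isWeightedHomogeneous_wittStructureRat p (hΦ.map (Int.castRingHom ℚ)) n ?_
  rwa [← map_wittStructureInt, coeff_map, eq_intCast, Int.cast_ne_zero]

theorem WittVector.isWeightedHomogeneous_wittAdd [Fact p.Prime] (n : ℕ) :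
    (wittAdd p n).IsWeightedHomogeneous (fun q : Fin 2 × ℕ => p ^ q.2) (p ^ n) := by
  rw [wittAdd, ← one_mul (p ^ n)]
  exact isWeightedHomogeneous_wittStructureInt p
    ((isHomogeneous_X ℤ (0 : Fin 2)).add (isHomogeneous_X ℤ 1)) n

theorem WittVector.isWeightedHomogeneous_wittSub [Fact p.Prime] (n : ℕ) :
    (wittSub p n).IsWeightedHomogeneous (fun q : Fin 2 × ℕ => p ^ q.2) (p ^ n) := by
  rw [wittSub, ← one_mul (p ^ n)]
  exact isWeightedHomogeneous_wittStructureInt p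
    ((isHomogeneous_X ℤ (0 : Fin 2)).sub (isHomogeneous_X ℤ 1)) n

end WittPolynomials

namespace Valuation

variable {R Γ₀ : Type*} [CommRing R] [LinearOrderedCommMonoidWithZero Γ₀] (v : Valuation R Γ₀)

theorem map_intCast_le_one (n : ℤ) : v n ≤ 1 := by
  induction n using Int.induction_on with
  | zero => simp
  | succ k ih => exact_mod_cast v.map_add_le ih v.map_one.le
  | pred k ih => exact_mod_cast (v.map_sub _ _).trans (max_le ih v.map_one.le)

theorem map_add_pow_le {a b : R} {N : ℕ} {γ : Γ₀} (ha : v a ^ N ≤ γ) (hb : v b ^ N ≤ γ) :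
    v (a + b) ^ N ≤ γ :=
  (pow_le_pow_left₀ zero_le (v.map_add a b) N).trans <| by
    rcases max_choice (v a) (v b) with h | h <;> rwa [h]

theorem map_aeval_pow_le {σ : Type*} {w : σ → ℕ} {φ : MvPolynomial σ ℤ} {D : ℕ}
    (hφ : φ.IsWeightedHomogeneous w D) {x : σ → R} {N : ℕ} (hN : N ≠ 0) {γ : Γ₀}
    (hx : ∀ i, v (x i) ^ N ≤ γ ^ w i) : v (aeval x φ) ^ N ≤ γ ^ D := by
  induction hφ using IsWeightedHomogeneous.induction_on with
  | zero => simp [zero_pow hN]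
  | add _ _ _ _ hp hq => simpa using v.map_add_pow_le hp hq
  | monomial d r hr =>
    rw [aeval_monomial, map_mul, mul_pow, ← hr, Finsupp.weight_apply, Finsupp.sum,
      ← Finset.prod_pow_eq_pow_sum, map_finsuppProd, Finsupp.prod, ← Finset.prod_pow]
    refine mul_le_of_le_one_of_le (pow_le_one₀ zero_le ?_) (Finset.prod_le_prod' fun i _ => ?_)
    · simpa using v.map_intCast_le_one r
    · rw [v.map_pow, ← pow_mul, mul_comm, pow_mul, smul_eq_mul, mul_comm, pow_mul]
      exact pow_le_pow_left₀ zero_le (hx i) _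

end Valuation

open WithZero

theorem WithZero.exp_le_of_exp_sub_one_lt {n : ℤ} {a : ℤᵐ⁰} (h : exp (n - 1) < a) :
    exp n ≤ a :=
  (le_log_iff_exp_le (exp_pos.trans h).ne').mp (by linarith [lt_log_of_exp_lt h])

section BrylinskiKato

variable {p : ℕ} [Fact p.Prime] {K : Type*} [Field K] [Valued K ℤᵐ⁰] {m : ℕ}

theorem brylinskiKatoFil_mono : Monotone (brylinskiKatoFil p K m) :=
  fun _ _ hnn' _ hw i => (hw i).trans (exp_le_exp.mpr hnn')

theorem mem_brylinskiKatoFil_iff_pow_le {n : ℤ} {w : TruncatedWittVector p (m + 1) K} :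
    w ∈ brylinskiKatoFil p K m n ↔
      ∀ i : Fin (m + 1), Valued.v (w.coeff i) ^ p ^ m ≤ exp n ^ p ^ (i : ℕ) := by
  refine forall_congr' fun i => ?_
  rw [← pow_le_pow_iff_left₀ zero_le zero_le (pow_ne_zero (i : ℕ) (Fact.out : p.Prime).ne_zero),
    ← pow_mul, ← pow_add, Nat.sub_add_cancel i.is_le]
  rfl

theorem TruncatedWittVector.valuation_coeff_out_pow_le {n : ℤ}
    {w : TruncatedWittVector p (m + 1) K} (hw : w ∈ brylinskiKatoFil p K m n) (j : ℕ) :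
    Valued.v (w.out.coeff j) ^ p ^ m ≤ exp n ^ p ^ j := by
  by_cases hj : j < m + 1
  · exact TruncatedWittVector.coeff_out w ⟨j, hj⟩ ▸ mem_brylinskiKatoFil_iff_pow_le.mp hw ⟨j, hj⟩
  · have hjm : ¬j ≤ m := by omega
    simp [TruncatedWittVector.out, hjm, (Fact.out : p.Prime).ne_zero]

theorem valuation_peval_pow_le {n : ℤ} {x y : TruncatedWittVector p (m + 1) K}
    (hx : x ∈ brylinskiKatoFil p K m n) (hy : y ∈ brylinskiKatoFil p K m n)
    {φ : MvPolynomial (Fin 2 × ℕ) ℤ} {i : ℕ}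
    (hφ : φ.IsWeightedHomogeneous (fun q : Fin 2 × ℕ => p ^ q.2) (p ^ i)) :
    Valued.v (WittVector.peval φ ![x.out.coeff, y.out.coeff]) ^ p ^ m ≤ exp n ^ p ^ i :=
  Valued.v.map_aeval_pow_le hφ (pow_ne_zero _ (Fact.out : p.Prime).ne_zero) fun ⟨b, j⟩ => by
    fin_cases b
    · exact TruncatedWittVector.valuation_coeff_out_pow_le hx j
    · exact TruncatedWittVector.valuation_coeff_out_pow_le hy j

theorem add_mem_brylinskiKatoFil {n : ℤ} {x y : TruncatedWittVector p (m + 1) K}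
    (hx : x ∈ brylinskiKatoFil p K m n) (hy : y ∈ brylinskiKatoFil p K m n) :
    x + y ∈ brylinskiKatoFil p K m n :=
  mem_brylinskiKatoFil_iff_pow_le.mpr fun i => by
    rw [show (x + y).coeff i = (x.out + y.out).coeff i from rfl, WittVector.add_coeff]
    exact valuation_peval_pow_le hx hy (WittVector.isWeightedHomogeneous_wittAdd p i)

theorem sub_mem_brylinskiKatoFil {n : ℤ} {x y : TruncatedWittVector p (m + 1) K}
    (hx : x ∈ brylinskiKatoFil p K m n) (hy : y ∈ brylinskiKatoFil p K m n) :
    x - y ∈ brylinskiKatoFil p K m n :=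
  mem_brylinskiKatoFil_iff_pow_le.mpr fun i => by
    rw [show (x - y).coeff i = (x.out - y.out).coeff i from rfl, WittVector.sub_coeff]
    exact valuation_peval_pow_le hx hy (WittVector.isWeightedHomogeneous_wittSub p i)

theorem valuation_wittFrobenius_coeff_pow (w : TruncatedWittVector p (m + 1) K)
    (i : Fin (m + 1)) :
    Valued.v ((wittFrobenius p K m w).coeff i) ^ p ^ (m - i.val) =
      (Valued.v (w.coeff i) ^ p ^ (m - i.val)) ^ p := by
  rw [wittFrobenius, TruncatedWittVector.coeff_mk, map_pow, ← pow_mul, ← pow_mul, mul_comm]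

theorem wittFrobenius_mem_brylinskiKatoFil {n : ℤ} {w : TruncatedWittVector p (m + 1) K}
    (hw : w ∈ brylinskiKatoFil p K m n) : wittFrobenius p K m w ∈ brylinskiKatoFil p K m (p * n) :=
  fun i => by
    change _ ≤ exp ((p : ℤ) * n)
    rw [valuation_wittFrobenius_coeff_pow, ← nsmul_eq_mul, exp_nsmul]
    exact pow_le_pow_left₀ zero_le (hw i) p

theorem wittFrobenius_not_mem_brylinskiKatoFil {n : ℤ} {w : TruncatedWittVector p (m + 1) K}
    (hw : w ∉ brylinskiKatoFil p K m (n - 1)) :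
    wittFrobenius p K m w ∉ brylinskiKatoFil p K m (p * n - 1) := by
  simp only [brylinskiKatoFil, Set.mem_ofPred_eq, not_forall, not_le] at hw ⊢
  obtain ⟨i, hi⟩ := hw
  refine ⟨i, ?_⟩
  rw [valuation_wittFrobenius_coeff_pow]
  calc exp (p * n - 1) < exp (p * n) := exp_lt_exp.mpr (by linarith)
    _ = exp n ^ p := by rw [← exp_nsmul, nsmul_eq_mul]
    _ ≤ _ := pow_le_pow_left₀ zero_le (exp_le_of_exp_sub_one_lt hi) p

end BrylinskiKato

theorem stmt8_general (p : ℕ) [Fact p.Prime] (K : Type*) [Field K]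
    [Valued K (WithZero (Multiplicative ℤ))]
    (m : ℕ) (s : ℕ) (hs : 1 ≤ s) (y : TruncatedWittVector p (m + 1) K)
    (h1 : y ∈ brylinskiKatoFil p K m (s : ℤ))
    (h2 : y ∉ brylinskiKatoFil p K m ((s : ℤ) - 1)) :
    wittFrobenius p K m y - y ∈ brylinskiKatoFil p K m ((p * s : ℕ) : ℤ) ∧
    wittFrobenius p K m y - y ∉ brylinskiKatoFil p K m (((p * s : ℕ) : ℤ) - 1) := by
  have hp : (2 : ℤ) ≤ p := by exact_mod_cast (Fact.out : p.Prime).two_le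
  have hsle : (s : ℤ) ≤ p * s - 1 := by nlinarith
  push_cast
  refine ⟨sub_mem_brylinskiKatoFil (wittFrobenius_mem_brylinskiKatoFil h1)
    (brylinskiKatoFil_mono (by linarith) h1), fun h => ?_⟩
  have hF := add_mem_brylinskiKatoFil h (brylinskiKatoFil_mono hsle h1)
  rw [sub_add_cancel] at hF
  exact wittFrobenius_not_mem_brylinskiKatoFil h2 hF

/-- Let `K` be a complete discretely valued field of characteristic
`p > 0`, `s ≥ 1` an integer and `y ∈ fil_s W_{m+1}(K) \ fil_{s−1} W_{m+1}(K)`.  Then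
`F(y) − y ∈ fil_{ps} W_{m+1}(K) \ fil_{ps−1} W_{m+1}(K)`. -/
theorem stmt8 (p : ℕ) [Fact p.Prime] (K : Type*) [Field K] [CharP K p]
    [Valued K (WithZero (Multiplicative ℤ))] [CompleteSpace K]
    (m : ℕ) (s : ℕ) (hs : 1 ≤ s) (y : TruncatedWittVector p (m + 1) K)
    (h1 : y ∈ brylinskiKatoFil p K m (s : ℤ))
    (h2 : y ∉ brylinskiKatoFil p K m ((s : ℤ) - 1)) :
    wittFrobenius p K m y - y ∈ brylinskiKatoFil p K m ((p * s : ℕ) : ℤ) ∧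
    wittFrobenius p K m y - y ∉ brylinskiKatoFil p K m (((p * s : ℕ) : ℤ) - 1) :=
  stmt8_general p K m s hs y h1 h2
end

section
/- Let R be a complete discrete valuation ring of characteristic p > 0 with fraction field K, maximal ideal 𝔪 and uniformizer π, and assume the module of logarithmic differentials Ω^1_R(log) is defined. For n ∈ ℤ, let fil_n Ω^1_K be the image of Ω^1_R(log) ⊗_R 𝔪^{−n} → Ω^1_K. Then for every integer n, the map F^m d : W_{m+1}(K) → Ω^1_K, (x_0,…,x_m) ↦ ∑ x_i^{p^{m−i}−1} dx_i, sends fil_n W_{m+1}(K) into fil_n Ω^1_K. -/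
open Multiplicative

/-- The filtration `fil_n Ω¹_K`: the image of `Ω¹_R(log) ⊗_R 𝔪^{−n} → Ω¹_K`, where `R`
is the valuation ring of `K`.  It is the additive subgroup (automatically an
`R`-submodule) of `Ω¹_K` generated by the elements `x·da` (`a ∈ R`) and
`x·dlog b = (x/b)·db` (`b ∈ K^×`), for `x ∈ 𝔪^{−n}`, i.e. `v x ≤ ofAdd n`. -/
noncomputable def filOmegaLog (K : Type*) [Field K]
    [Valued K (WithZero (Multiplicative ℤ))] (n : ℤ) :
    AddSubgroup (KaehlerDifferential ℤ K) :=
  AddSubgroup.closure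
    {ω | (∃ x a : K,
            Valued.v x ≤ ((Multiplicative.ofAdd n : Multiplicative ℤ) :
              WithZero (Multiplicative ℤ)) ∧
            Valued.v a ≤ 1 ∧ ω = x • (KaehlerDifferential.D ℤ K) a) ∨
         (∃ x b : K,
            Valued.v x ≤ ((Multiplicative.ofAdd n : Multiplicative ℤ) :
              WithZero (Multiplicative ℤ)) ∧
            b ≠ 0 ∧ ω = (x * b⁻¹) • (KaehlerDifferential.D ℤ K) b)}

/-- Let `R` be a complete discrete valuation ring of characteristic
`p > 0` with fraction field `K`.  For every integer `n`, the map
`F^m d : W_{m+1}(K) → Ω¹_K` sends `fil_n W_{m+1}(K)` into `fil_n Ω¹_K`. -/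
theorem stmt10 (p : ℕ) [Fact p.Prime] (K : Type*) [Field K] [CharP K p]
    [Valued K (WithZero (Multiplicative ℤ))] [CompleteSpace K]
    (m : ℕ) (n : ℤ) (w : TruncatedWittVector p (m + 1) K)
    (hw : w ∈ brylinskiKatoFil p K m n) :
    FmD p K m w ∈ filOmegaLog K n := by
  unfold FmD filOmegaLog
  apply AddSubgroup.sum_mem
  intro i _
  set a := w.coeff i with ha
  by_cases h0 : a = 0
  · rcases Nat.eq_zero_or_pos (p ^ (m - i.val) - 1) with he | hp
    · rw [h0, he, pow_zero, one_smul, map_zero]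
      exact AddSubgroup.zero_mem _
    · rw [h0, zero_pow hp.ne', zero_smul]
      exact AddSubgroup.zero_mem _
  · apply AddSubgroup.subset_closure
    right
    refine ⟨a ^ (p ^ (m - i.val)), a, ?_, h0, ?_⟩
    · rw [map_pow]
      exact hw i
    · congr 1
      rw [← div_eq_mul_inv, eq_div_iff h0, ← pow_succ,
        Nat.sub_add_cancel (Nat.one_le_iff_ne_zero.mpr
          (pow_ne_zero _ (Fact.out : p.Prime).ne_zero))]
end

section
/- Let K be a complete discretely valued field of characteristic p > 0. For m ≥ 0 and n ≥ 0 define fil'_n W_{m+1}(K) = V^{m+1−m'}(fil_{n+1} W_{m'}(K)) + fil_n W_{m+1}(K), where m' = min(ord_p(n+1), m+1), fil denotes the Brylinski–Kato filtration, and V is Verschiebung. Then V(fil'_n W_{m+1}(K)) ⊆ fil'_n W_{m+2}(K). -/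
open Multiplicative

/-- The subset `V^{m+1−m'}(fil_{n+1} W_{m'}(K))` of `W_{m+1}(K)`, where
`m' = min(ord_p(n+1), m+1)`: since Verschiebung is the shift `(x_0,…) ↦ (0,x_0,…)`,
it consists of the Witt vectors whose first `m+1−m'` coefficients vanish and whose
coefficients satisfy `p^{m−i}·v(x_i) ≥ −(n+1)`. -/
def verschiebungPart (p : ℕ) [Fact p.Prime] (K : Type*) [Field K]
    [Valued K (WithZero (Multiplicative ℤ))] (m : ℕ) (n : ℕ) :
    Set (TruncatedWittVector p (m + 1) K) :=
  {w | (∀ i : Fin (m + 1), i.val < (m + 1) - min (padicValNat p (n + 1)) (m + 1) →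
          w.coeff i = 0) ∧
       ∀ i : Fin (m + 1),
         (Valued.v (w.coeff i)) ^ (p ^ (m - i.val)) ≤
           ((Multiplicative.ofAdd ((n : ℤ) + 1) : Multiplicative ℤ) :
             WithZero (Multiplicative ℤ))}

/-- Matsuda's modified filtration
`fil'_n W_{m+1}(K) = V^{m+1−m'}(fil_{n+1} W_{m'}(K)) + fil_n W_{m+1}(K)`,
with `m' = min(ord_p(n+1), m+1)`. -/
def matsudaFil (p : ℕ) [Fact p.Prime] (K : Type*) [Field K]
    [Valued K (WithZero (Multiplicative ℤ))] (m : ℕ) (n : ℕ) :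
    Set (TruncatedWittVector p (m + 1) K) :=
  {w | ∃ a ∈ verschiebungPart p K m n, ∃ b ∈ brylinskiKatoFil p K m (n : ℤ), w = a + b}

/-- The shift `(x_0,…,x_m) ↦ (0,x_0,…,x_m)` on truncated Witt vectors is additive,
since it is induced by the Verschiebung on (full) Witt vectors. -/
lemma shift_add {p : ℕ} [hp : Fact p.Prime] {K : Type*} [CommRing K] {m : ℕ}
    (a b : TruncatedWittVector p (m + 1) K) :
    TruncatedWittVector.mk p (Fin.cons 0 (a + b).coeff) =
      TruncatedWittVector.mk p (Fin.cons 0 a.coeff) +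
        TruncatedWittVector.mk p (Fin.cons 0 b.coeff) := by
  have tout : ∀ x : TruncatedWittVector p (m + 1) K,
      WittVector.truncate (m + 1) x.out = x := fun x => x.truncateFun_out
  have key : ∀ x : TruncatedWittVector p (m + 1) K,
      TruncatedWittVector.mk p (Fin.cons 0 x.coeff) =
        WittVector.truncate (m + 2) (WittVector.verschiebung x.out) := by
    intro x
    ext i
    refine Fin.cases ?_ (fun j => ?_) i
    · simp
    · simp [Fin.val_succ, WittVector.verschiebung_coeff_add_one,
        TruncatedWittVector.coeff_out]
  rw [key, key, key, ← map_add (WittVector.truncate (m + 2)),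
    ← map_add (WittVector.verschiebung)]
  have h : WittVector.truncate (m + 1) (a.out + b.out) = a + b := by
    rw [map_add, tout, tout]
  ext i
  refine Fin.cases ?_ (fun j => ?_) i
  · simp only [WittVector.coeff_truncate]
    rfl
  · simp only [WittVector.coeff_truncate, Fin.val_succ,
      WittVector.verschiebung_coeff_add_one]
    have := congrArg (fun z => TruncatedWittVector.coeff j z) h
    simp only [WittVector.coeff_truncate] at this
    rw [this]
    exact TruncatedWittVector.coeff_out _ j

/-- Let `K` be a complete discretely valued field of characteristic
`p > 0`.  Then the Verschiebung `V : W_{m+1}(K) → W_{m+2}(K)`, `(x_0,…,x_m) ↦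
(0,x_0,…,x_m)`, satisfies `V(fil'_n W_{m+1}(K)) ⊆ fil'_n W_{m+2}(K)`. -/
theorem stmt12 (p : ℕ) [Fact p.Prime] (K : Type*) [Field K] [CharP K p]
    [Valued K (WithZero (Multiplicative ℤ))] [CompleteSpace K]
    (m : ℕ) (n : ℕ) (w : TruncatedWittVector p (m + 1) K)
    (hw : w ∈ matsudaFil p K m n) :
    TruncatedWittVector.mk p (Fin.cons 0 w.coeff) ∈ matsudaFil p K (m + 1) n := by
  obtain ⟨a, ha, b, hb, rfl⟩ := hw
  have hp0 : p ≠ 0 := (Fact.out (p := p.Prime)).pos.ne'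
  refine ⟨TruncatedWittVector.mk p (Fin.cons 0 a.coeff), ⟨?_, ?_⟩,
    TruncatedWittVector.mk p (Fin.cons 0 b.coeff), ?_, shift_add a b⟩
  · -- vanishing condition
    intro i hi
    rcases Fin.eq_zero_or_eq_succ i with h0 | ⟨j, rfl⟩
    · subst h0
      simp [TruncatedWittVector.coeff_mk]
    · simp only [TruncatedWittVector.coeff_mk, Fin.cons_succ]
      apply ha.1 j
      rw [Fin.val_succ] at hi
      omega
  · -- valuation condition for the Verschiebung part
    intro i
    rcases Fin.eq_zero_or_eq_succ i with h0 | ⟨j, rfl⟩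
    · subst h0
      simp only [TruncatedWittVector.coeff_mk, Fin.cons_zero, map_zero]
      rw [zero_pow (pow_ne_zero _ hp0)]
      exact zero_le'
    · simp only [TruncatedWittVector.coeff_mk, Fin.cons_succ, Fin.val_succ]
      have h := ha.2 j
      rw [Nat.add_sub_add_right]
      exact h
  · -- valuation condition for the Brylinski–Kato part
    intro i
    rcases Fin.eq_zero_or_eq_succ i with h0 | ⟨j, rfl⟩
    · subst h0
      simp only [TruncatedWittVector.coeff_mk, Fin.cons_zero, map_zero]
      rw [zero_pow (pow_ne_zero _ hp0)]
      exact zero_le'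
    · simp only [TruncatedWittVector.coeff_mk, Fin.cons_succ, Fin.val_succ]
      have h := hb j
      rw [Nat.add_sub_add_right]
      exact h
end

section
/- Let R be a complete discrete valuation ring of characteristic p > 0 with fraction field K, residue field F, maximal ideal 𝔪 and uniformizer π. Let Ω^1_R(log) be the quotient of Ω^1_R ⊕ (R ⊗_ℤ K^×) by the submodule generated by (da, 0) − (0, a ⊗ a) for a ∈ R \ {0}, and set Ω^1_F(log) = Ω^1_R(log) ⊗_R F. Then there is an exact sequence of F-vector spaces 0 → Ω^1_F → Ω^1_F(log) → F → 0, where the second map sends the class of (0, a ⊗ b) to a·v(b) (a ∈ F, b ∈ K^×), and this sequence is split by the element dlog[π] (the class of (0, 1 ⊗ π)). -/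
open TensorProduct IsLocalRing

/-- The presentation module `Ω¹_F ⊕ (F ⊗_ℤ K^×)` for the logarithmic differentials of
the residue field `F` of a discrete valuation ring `R` with fraction field `K`.
(`K^×` is written additively as `Additive Kˣ`.) -/
noncomputable abbrev logPresModule (R : Type*) [CommRing R] [IsDomain R]
    [IsDiscreteValuationRing R] : Type _ :=
  (KaehlerDifferential ℤ (ResidueField R)) ×
    (TensorProduct ℤ (ResidueField R) (Additive (FractionRing R)ˣ))

/-- The submodule of relations: it is generated by the elements
`(d ā, 0) − (0, ā ⊗ a)` for `a ∈ R ∖ {0}` (where `ā` is the residue class of `a` and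
the second component uses `a` viewed as a unit `b` of `K = Frac(R)`).  The quotient
`logPresModule R ⧸ logRelations R` is `Ω¹_F(log)`. -/
noncomputable def logRelations (R : Type*) [CommRing R] [IsDomain R]
    [IsDiscreteValuationRing R] : Submodule (ResidueField R) (logPresModule R) :=
  Submodule.span (ResidueField R)
    {z | ∃ (a : R) (b : (FractionRing R)ˣ),
        (b : FractionRing R) = algebraMap R (FractionRing R) a ∧
        z = ((KaehlerDifferential.D ℤ (ResidueField R)) (residue R a), 0)
            - (0, (residue R a) ⊗ₜ[ℤ] Additive.ofMul b)}

/-!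
Choosing the uniformizer `π` identifies `Kˣ` with `Rˣ × ℤ`, `b = u π^j`. Both
`(ω, x ⊗ b) ↦ x·v(b)` and `ρ : (ω, x ⊗ b) ↦ ω + x·dlog ū` kill the relations: for
`a ≠ 0` either `a` is a unit, so that `v(a) = 0` and `dā = ā·dlog ā`, or `ā = 0`. So `ρ`
retracts the inclusion `ι : Ω¹_F → Ω¹_F(log)`, and the relation for units shows that every
class `q` equals `ι(ρ q) + res(q)·dlog[π]`, which is exactness in the middle;
`res(dlog[π]) = v(π) = 1` splits the sequence.
-/

namespace IsDiscreteValuationRing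

variable {R : Type*} [CommRing R] [IsDomain R] [IsDiscreteValuationRing R]
  (K : Type*) [Field K] [Algebra R K] [IsFractionRing R K] {π : R}

noncomputable def unitsMulZPow (hπ : Irreducible π) : Rˣ × Multiplicative ℤ →* Kˣ :=
  (Units.map (algebraMap R K : R →* K)).coprod
    (zpowersHom Kˣ (Units.mk0 (algebraMap R K π) (by simpa using hπ.ne_zero)))

variable {K}

omit [IsDomain R] [IsDiscreteValuationRing R] in
lemma unitsMulZPow_apply (hπ : Irreducible π) (u : Rˣ) (j : ℤ) :
    (unitsMulZPow K hπ (u, .ofAdd j) : K) = algebraMap R K u * algebraMap R K π ^ j := by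
  simp [unitsMulZPow]

lemma unitsMulZPow_bijective (hπ : Irreducible π) :
    Function.Bijective (unitsMulZPow K hπ) := by
  refine ⟨(injective_iff_map_eq_one _).2 ?_, fun b => ?_⟩
  · rintro ⟨u, j⟩ h
    obtain ⟨j, rfl⟩ : ∃ k : ℤ, Multiplicative.ofAdd k = j := ⟨j.toAdd, rfl⟩
    replace h : algebraMap R K u * algebraMap R K π ^ j = 1 := by
      rw [← unitsMulZPow_apply hπ, h, Units.val_one]
    obtain ⟨n, rfl | rfl⟩ := Int.eq_nat_or_neg j
    · have hun : (u : R) * π ^ n = (1 : Rˣ) * π ^ 0 :=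
        IsFractionRing.injective R K (by simpa using h)
      obtain rfl := unit_mul_pow_congr_pow hπ hπ _ _ _ _ hun
      exact Prod.ext (Units.ext (by simpa using hun)) (by simp)
    · have hun : (u : R) * π ^ 0 = (1 : Rˣ) * π ^ n := by
        have hπK : algebraMap R K π ≠ 0 := by simpa using hπ.ne_zero
        rw [zpow_neg, zpow_natCast, mul_inv_eq_one₀ (pow_ne_zero _ hπK)] at h
        exact IsFractionRing.injective R K (by simpa using h)
      obtain rfl := unit_mul_pow_congr_pow hπ hπ _ _ _ _ hun
      exact Prod.ext (Units.ext (by simpa using hun)) (by simp)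
  · obtain ⟨j, u, hb⟩ := exists_units_eq_smul_zpow_of_irreducible hπ b.ne_zero
    exact ⟨(u, .ofAdd j), Units.ext <| by
      rw [unitsMulZPow_apply, hb, Units.smul_def, Algebra.smul_def]⟩

variable (K)

noncomputable def unitsMulZPowEquiv (hπ : Irreducible π) : Rˣ × Multiplicative ℤ ≃* Kˣ :=
  MulEquiv.ofBijective _ (unitsMulZPow_bijective hπ)

noncomputable def unitPart (hπ : Irreducible π) : Kˣ →* Rˣ :=
  (MonoidHom.fst _ _).comp (unitsMulZPowEquiv K hπ).symm.toMonoidHom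

noncomputable def unitsValuation (hπ : Irreducible π) : Additive Kˣ →+ ℤ :=
  MonoidHom.toAdditiveLeft ((MonoidHom.snd _ _).comp (unitsMulZPowEquiv K hπ).symm.toMonoidHom)

variable {K}

lemma unitPart_eq_and_unitsValuation_eq (hπ : Irreducible π) {b : Kˣ} {u : Rˣ} {j : ℤ}
    (hb : (b : K) = algebraMap R K u * algebraMap R K π ^ j) :
    unitPart K hπ b = u ∧ unitsValuation K hπ (.ofMul b) = j := by
  have : (unitsMulZPowEquiv K hπ).symm b = (u, .ofAdd j) :=
    (MulEquiv.symm_apply_eq _).2 (Units.ext (hb.trans (unitsMulZPow_apply hπ u j).symm))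
  simp [unitPart, unitsValuation, this]

lemma unitPart_mul_zpow_unitsValuation (hπ : Irreducible π) (b : Kˣ) :
    algebraMap R K (unitPart K hπ b) * algebraMap R K π ^ unitsValuation K hπ (.ofMul b) =
      b := by
  rw [← unitsMulZPow_apply hπ]
  exact congrArg Units.val ((unitsMulZPowEquiv K hπ).apply_symm_apply b)

end IsDiscreteValuationRing

namespace KaehlerDifferential

variable (A S : Type*) [CommRing A] [CommRing S] [Algebra A S]

noncomputable def dlog : Additive Sˣ →+ Ω[S⁄A] where
  toFun u := ((u.toMul⁻¹ : Sˣ) : S) • D A S u.toMul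
  map_zero' := by simp
  map_add' u v := by
    simp only [toMul_add, Units.val_mul, Derivation.leibniz, smul_add, smul_smul, mul_inv_rev]
    rw [mul_assoc, Units.inv_mul, mul_one, mul_right_comm, Units.inv_mul, one_mul, add_comm]

variable {A S}

lemma units_smul_dlog (u : Sˣ) : (u : S) • dlog A S (.ofMul u) = D A S u := by
  simp [dlog, smul_smul]

end KaehlerDifferential

/-- `f.toIntLinearMap.liftBaseChange A` alone does not elaborate when `A` is a residue field:
the `ℤ`-algebra structure of `ResidueField R` comes from that of `R`, and is not reducibly the
canonical `ℤ`-module structure, so `IsScalarTower ℤ A N` is not found. -/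
noncomputable def AddMonoidHom.liftBaseChange (A : Type*) [CommRing A] {M N : Type*}
    [AddCommGroup M] [AddCommGroup N] [Module A N] (f : M →+ N) : A ⊗[ℤ] M →ₗ[A] N :=
  f.toIntLinearMap.liftBaseChange A

@[simp]
lemma AddMonoidHom.liftBaseChange_tmul (A : Type*) [CommRing A] {M N : Type*}
    [AddCommGroup M] [AddCommGroup N] [Module A N] (f : M →+ N) (x : A) (m : M) :
    f.liftBaseChange A (x ⊗ₜ m) = x • f m := rfl

lemma LinearMap.exact_of_add_comp_eq_id {R M N P : Type*} [Semiring R] [AddCommMonoid M]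
    [AddCommMonoid N] [AddCommMonoid P] [Module R M] [Module R N] [Module R P]
    {i : N →ₗ[R] M} {r : M →ₗ[R] P} {s : M →ₗ[R] N} {t : P →ₗ[R] M}
    (hri : r ∘ₗ i = 0) (h : i ∘ₗ s + t ∘ₗ r = LinearMap.id) : Function.Exact i r :=
  exact_of_comp_of_mem_range hri fun m hm => ⟨s m, by simpa [hm] using LinearMap.congr_fun h m⟩

namespace LogDifferentials

open IsDiscreteValuationRing KaehlerDifferential LinearMap

variable {R : Type*} [CommRing R] [IsDomain R] [IsDiscreteValuationRing R] {π : R}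

local notation "K" => FractionRing R
local notation "F" => ResidueField R
local notation "Ωlog" => logPresModule R ⧸ logRelations R

noncomputable def residueValuation (hπ : Irreducible π) : Additive Kˣ →+ F :=
  (Int.castAddHom F).comp (unitsValuation K hπ)

noncomputable def dlogUnitPart (hπ : Irreducible π) : Additive Kˣ →+ Ω[F⁄ℤ] :=
  (dlog ℤ F).comp ((Units.map (residue R : R →* F)).comp (unitPart K hπ)).toAdditive

noncomputable def presResidue (hπ : Irreducible π) : logPresModule R →ₗ[F] F :=
  (residueValuation hπ).liftBaseChange F ∘ₗ snd F _ _

noncomputable def presRetraction (hπ : Irreducible π) : logPresModule R →ₗ[F] Ω[F⁄ℤ] :=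
  fst F _ _ + (dlogUnitPart hπ).liftBaseChange F ∘ₗ snd F _ _

lemma residue_mul_residueValuation {a : R} {b : Kˣ} (hπ : Irreducible π)
    (hb : (b : K) = algebraMap R K a) :
    residue R a * residueValuation hπ (.ofMul b) = 0 := by
  rcases em (IsUnit a) with ⟨u, rfl⟩ | ha
  · obtain ⟨-, hv⟩ :=
      unitPart_eq_and_unitsValuation_eq hπ (b := b) (u := u) (j := 0) (by simp [hb])
    simp [residueValuation, hv]
  · simp [(residue_eq_zero_iff a).2 ((mem_maximalIdeal a).2 ha)]

lemma D_residue_eq_smul_dlogUnitPart {a : R} {b : Kˣ} (hπ : Irreducible π)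
    (hb : (b : K) = algebraMap R K a) :
    D ℤ F (residue R a) = residue R a • dlogUnitPart hπ (.ofMul b) := by
  rcases em (IsUnit a) with ⟨u, rfl⟩ | ha
  · obtain ⟨hu, -⟩ :=
      unitPart_eq_and_unitsValuation_eq hπ (b := b) (u := u) (j := 0) (by simp [hb])
    simpa [dlogUnitPart, hu] using
      (units_smul_dlog (A := ℤ) (Units.map (residue R : R →* F) u)).symm
  · simp [(residue_eq_zero_iff a).2 ((mem_maximalIdeal a).2 ha)]

lemma logRelations_le_ker_presResidue (hπ : Irreducible π) :
    logRelations R ≤ ker (presResidue hπ) := by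
  rw [logRelations, Submodule.span_le]
  rintro _ ⟨a, b, hb, rfl⟩
  simp [presResidue, residue_mul_residueValuation hπ hb]

lemma logRelations_le_ker_presRetraction (hπ : Irreducible π) :
    logRelations R ≤ ker (presRetraction hπ) := by
  rw [logRelations, Submodule.span_le]
  rintro _ ⟨a, b, hb, rfl⟩
  simp [presRetraction, D_residue_eq_smul_dlogUnitPart hπ hb]

variable (R) in
noncomputable abbrev logIncl : Ω[F⁄ℤ] →ₗ[F] Ωlog :=
  (logRelations R).mkQ ∘ₗ inl F _ _

variable (R) in
noncomputable def dlogClass (b : Kˣ) : Ωlog :=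
  (logRelations R).mkQ (0, 1 ⊗ₜ .ofMul b)

noncomputable def logResidue (hπ : Irreducible π) : Ωlog →ₗ[F] F :=
  (logRelations R).liftQ _ (logRelations_le_ker_presResidue hπ)

noncomputable def logRetraction (hπ : Irreducible π) : Ωlog →ₗ[F] Ω[F⁄ℤ] :=
  (logRelations R).liftQ _ (logRelations_le_ker_presRetraction hπ)

lemma logResidue_mkQ_zero_tmul (hπ : Irreducible π) (x : F) (b : Additive Kˣ) :
    logResidue hπ ((logRelations R).mkQ (0, x ⊗ₜ b)) = x * unitsValuation K hπ b := by
  simp [logResidue, presResidue, residueValuation]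

lemma logRetraction_mkQ_zero_tmul (hπ : Irreducible π) (x : F) (b : Additive Kˣ) :
    logRetraction hπ ((logRelations R).mkQ (0, x ⊗ₜ b)) = x • dlogUnitPart hπ b := by
  simp [logRetraction, presRetraction]

lemma logResidue_comp_logIncl (hπ : Irreducible π) : logResidue hπ ∘ₗ logIncl R = 0 := by
  ext; simp [logResidue, presResidue]

lemma logRetraction_comp_logIncl (hπ : Irreducible π) :
    logRetraction hπ ∘ₗ logIncl R = LinearMap.id := by
  ext; simp [logRetraction, presRetraction]

lemma logResidue_comp_toSpanSingleton_dlogClass (hπ : Irreducible π) {πK : Kˣ}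
    (hvπ : unitsValuation K hπ (.ofMul πK) = 1) :
    logResidue hπ ∘ₗ toSpanSingleton F _ (dlogClass R πK) = LinearMap.id := by
  ext
  rw [comp_apply, toSpanSingleton_apply, one_smul, dlogClass, logResidue_mkQ_zero_tmul, hvπ]
  simp

lemma mkQ_zero_tmul_units_map (x : F) (u : Rˣ) :
    (logRelations R).mkQ (0, x ⊗ₜ .ofMul (Units.map (algebraMap R K : R →* K) u)) =
      logIncl R (x • dlog ℤ F (.ofMul (Units.map (residue R : R →* F) u))) := by
  set ū := Units.map (residue R : R →* F) u
  set uK := Units.map (algebraMap R K : R →* K) u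
  have hrel :
      (logRelations R).mkQ (D ℤ F ū, 0) = (logRelations R).mkQ (0, (ū : F) ⊗ₜ .ofMul uK) :=
    (Submodule.Quotient.eq _).2 (Submodule.subset_span ⟨u, uK, rfl, rfl⟩)
  rw [← units_smul_dlog] at hrel
  calc (logRelations R).mkQ (0, x ⊗ₜ .ofMul uK)
      = (x * ((ū⁻¹ : Fˣ) : F)) • (logRelations R).mkQ (0, (ū : F) ⊗ₜ .ofMul uK) := by
        rw [← map_smul, Prod.smul_mk, smul_zero, smul_tmul', smul_eq_mul, mul_assoc,
          Units.inv_mul, mul_one]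
    _ = logIncl R (x • dlog ℤ F (.ofMul ū)) := by
        rw [← hrel, ← map_smul, Prod.smul_mk, smul_zero, smul_smul, mul_assoc, Units.inv_mul,
          mul_one]
        rfl

lemma mkQ_zero_tmul (hπ : Irreducible π) {πK : Kˣ} (hπK : (πK : K) = algebraMap R K π)
    (x : F) (b : Additive Kˣ) :
    (logRelations R).mkQ (0, x ⊗ₜ b) =
      logIncl R (x • dlogUnitPart hπ b) + (x * unitsValuation K hπ b) • dlogClass R πK := by
  set u := unitPart K hπ b.toMul
  set j := unitsValuation K hπ b
  have hb : b = .ofMul (Units.map (algebraMap R K : R →* K) u) + j • .ofMul πK := by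
    refine Additive.toMul.injective (Units.ext ?_)
    simpa [hπK] using (unitPart_mul_zpow_unitsValuation hπ b.toMul).symm
  have hj : x ⊗ₜ[ℤ] (j • Additive.ofMul πK) = j • x ⊗ₜ[ℤ] Additive.ofMul πK :=
    tmul_smul j x (Additive.ofMul πK)
  have hsplit : ((0 : Ω[F⁄ℤ]), x ⊗ₜ b) =
      ((0 : Ω[F⁄ℤ]), x ⊗ₜ[ℤ] .ofMul (Units.map (algebraMap R K : R →* K) u)) +
        j • x • ((0 : Ω[F⁄ℤ]), (1 : F) ⊗ₜ[ℤ] .ofMul πK) := by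
    conv_lhs => rw [hb, tmul_add, hj]
    ext
    · simp
    · simp only [Prod.snd_add, Prod.smul_snd, smul_tmul', smul_eq_mul, mul_one]
  rw [hsplit, map_add, map_zsmul, map_smul, mkQ_zero_tmul_units_map, ← Int.cast_smul_eq_zsmul F,
    smul_smul, mul_comm]
  rfl

lemma logIncl_comp_logRetraction_add (hπ : Irreducible π) {πK : Kˣ}
    (hπK : (πK : K) = algebraMap R K π) :
    logIncl R ∘ₗ logRetraction hπ +
      toSpanSingleton F Ωlog (dlogClass R πK) ∘ₗ logResidue hπ = LinearMap.id := by
  ext b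
  · simp [logRetraction, presRetraction, logResidue, presResidue]
  · induction b using TensorProduct.induction_on with
    | zero => rw [map_zero, map_zero]
    | add s t hs ht => rw [map_add, map_add, hs, ht]
    | tmul x b =>
      simp only [comp_apply, LinearMap.add_apply, inr_apply, id_apply, toSpanSingleton_apply,
        logResidue_mkQ_zero_tmul, logRetraction_mkQ_zero_tmul]
      exact (mkQ_zero_tmul hπ hπK x b).symm

end LogDifferentials

theorem stmt19_general (R : Type*) [CommRing R] [IsDomain R]
    [IsDiscreteValuationRing R]
    (π : R) (hπ : Irreducible π)
    (πK : (FractionRing R)ˣ) (hπK : (πK : FractionRing R) = algebraMap R (FractionRing R) π) :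
    ∃ res : (logPresModule R ⧸ logRelations R) →ₗ[ResidueField R] (ResidueField R),
      (∀ (x : ResidueField R) (b : (FractionRing R)ˣ) (u : Rˣ) (j : ℤ),
          (b : FractionRing R) =
            algebraMap R (FractionRing R) (u : R) * (algebraMap R (FractionRing R) π) ^ j →
          res ((logRelations R).mkQ (0, x ⊗ₜ[ℤ] Additive.ofMul b)) =
            x * (j : ResidueField R)) ∧
      Function.Injective
        ((logRelations R).mkQ ∘ₗ
          LinearMap.inl (ResidueField R) (KaehlerDifferential ℤ (ResidueField R))
            (TensorProduct ℤ (ResidueField R) (Additive (FractionRing R)ˣ))) ∧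
      LinearMap.range
        ((logRelations R).mkQ ∘ₗ
          LinearMap.inl (ResidueField R) (KaehlerDifferential ℤ (ResidueField R))
            (TensorProduct ℤ (ResidueField R) (Additive (FractionRing R)ˣ))) =
        LinearMap.ker res ∧
      Function.Surjective res ∧
      (∀ x : ResidueField R,
        res (x • (logRelations R).mkQ
            (0, (1 : ResidueField R) ⊗ₜ[ℤ] Additive.ofMul πK)) = x) := by
  have hvπ : IsDiscreteValuationRing.unitsValuation (FractionRing R) hπ (.ofMul πK) = 1 :=
    (IsDiscreteValuationRing.unitPart_eq_and_unitsValuation_eq hπ (u := 1) (j := 1)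
      (by simp [hπK])).2
  have hsection := LogDifferentials.logResidue_comp_toSpanSingleton_dlogClass hπ hvπ
  refine ⟨LogDifferentials.logResidue hπ, fun x b u j hb => ?_,
    LinearMap.injective_of_comp_eq_id _ _ (LogDifferentials.logRetraction_comp_logIncl hπ), ?_,
    LinearMap.surjective_of_comp_eq_id _ _ hsection, LinearMap.congr_fun hsection⟩
  · rw [LogDifferentials.logResidue_mkQ_zero_tmul,
      (IsDiscreteValuationRing.unitPart_eq_and_unitsValuation_eq hπ hb).2]
  · exact (LinearMap.exact_iff.1 (LinearMap.exact_of_add_comp_eq_id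
      (LogDifferentials.logResidue_comp_logIncl hπ)
      (LogDifferentials.logIncl_comp_logRetraction_add hπ hπK))).symm

/-- Let `R` be a complete discrete valuation ring of characteristic
`p > 0` with fraction field `K`, residue field `F`, and uniformizer `π`.  Let
`Ω¹_F(log)` be the quotient of `Ω¹_F ⊕ (F ⊗_ℤ K^×)` by the relations
`(d ā, 0) = (0, ā ⊗ a)` (`a ∈ R ∖ {0}`).  Then there is an exact sequence of
`F`-vector spaces `0 → Ω¹_F → Ω¹_F(log) → F → 0`, where the first map is induced by
the inclusion of the first summand and the second map (the residue) sends the class of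
`(0, x ⊗ b)` to `x·v(b)` — expressed below by its value on `b = u·π^j` (`u ∈ R^×`,
`j ∈ ℤ`); moreover the sequence is split by `dlog[π]`, the class of `(0, 1 ⊗ π)`:
the map `x ↦ x • dlog[π]` is a section of the residue map. -/
theorem stmt19 (p : ℕ) (hp : p.Prime) (R : Type*) [CommRing R] [IsDomain R]
    [IsDiscreteValuationRing R] [CharP R p]
    [IsAdicComplete (maximalIdeal R) R]
    (π : R) (hπ : Irreducible π)
    (πK : (FractionRing R)ˣ) (hπK : (πK : FractionRing R) = algebraMap R (FractionRing R) π) :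
    ∃ res : (logPresModule R ⧸ logRelations R) →ₗ[ResidueField R] (ResidueField R),
      (∀ (x : ResidueField R) (b : (FractionRing R)ˣ) (u : Rˣ) (j : ℤ),
          (b : FractionRing R) =
            algebraMap R (FractionRing R) (u : R) * (algebraMap R (FractionRing R) π) ^ j →
          res ((logRelations R).mkQ (0, x ⊗ₜ[ℤ] Additive.ofMul b)) =
            x * (j : ResidueField R)) ∧
      Function.Injective
        ((logRelations R).mkQ ∘ₗ
          LinearMap.inl (ResidueField R) (KaehlerDifferential ℤ (ResidueField R))
            (TensorProduct ℤ (ResidueField R) (Additive (FractionRing R)ˣ))) ∧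
      LinearMap.range
        ((logRelations R).mkQ ∘ₗ
          LinearMap.inl (ResidueField R) (KaehlerDifferential ℤ (ResidueField R))
            (TensorProduct ℤ (ResidueField R) (Additive (FractionRing R)ˣ))) =
        LinearMap.ker res ∧
      Function.Surjective res ∧
      (∀ x : ResidueField R,
        res (x • (logRelations R).mkQ
            (0, (1 : ResidueField R) ⊗ₜ[ℤ] Additive.ofMul πK)) = x) :=
  stmt19_general R π hπ πK hπK
end
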